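/- arXiv:physics/9710037 — 3 statements merged into one kernel-verified Lean document; each statement's English description precedes it below -/
import Mathlib

section
/- Fix half-integers b, β with |β| ≤ b, and a half-integer δ. Let γ = c (respectively γ = −c), α = −β−γ, and let a, c → ∞ with c − a = δ fixed. Then √(a+b+c+1) · ( b a c ; β α γ ) − (−1)^ξ · δ_{α,−a} → 0 (respectively δ_{α,a}), where ξ = −a+b−c when γ = c and ξ = 2b+δ−β when γ = −c. -/
open Real Filter

/-- Factorial of a rational which is (in intended use) a non-negative integer. -/
noncomputable def hfact (q : ℚ) : ℝ := (Nat.factorial q.num.toNat : ℝ)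

/-- `q` is a non-negative integer. -/
def isNNInt (q : ℚ) : Prop := 0 ≤ q ∧ q.den = 1

instance (q : ℚ) : Decidable (isNNInt q) := by unfold isNNInt; infer_instance

/-- `q` is a half-integer. -/
def isHalfInt (q : ℚ) : Prop := (2*q).den = 1

/-- `(-1)^q` for integer `q`, realized as `cos (q π)`. -/
noncomputable def msign (q : ℚ) : ℝ := Real.cos ((q : ℝ) * Real.pi)

/-- Triangle coefficient Δ(abc). -/
noncomputable def tri (a b c : ℚ) : ℝ :=
  hfact (a+b-c) * hfact (a-b+c) * hfact (-a+b+c) / hfact (a+b+c+1)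

/-- Admissibility of a triple: triangle inequality, non-negativity and integer sum. -/
def triAdm (a b c : ℚ) : Prop :=
  0 ≤ a ∧ 0 ≤ b ∧ 0 ≤ c ∧ c ≤ a + b ∧ a ≤ b + c ∧ b ≤ a + c ∧ (a+b+c).den = 1

/-- The Wigner 3j symbol, via the Racah single-sum formula (eq. (8)). -/
noncomputable def threeJ (a b c α β γ : ℚ) : ℝ :=
  Real.sqrt (tri a b c * hfact (a+α) * hfact (a-α) * hfact (b+β) * hfact (b-β)
      * hfact (c+γ) * hfact (c-γ)) *
  ∑ z ∈ Finset.range ((a+b+c).num.toNat + 1),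
    if isNNInt (a+b-c-(z:ℚ)) ∧ isNNInt (c-b+α+(z:ℚ)) ∧ isNNInt (b+β-(z:ℚ)) ∧
       isNNInt (a-α-(z:ℚ)) ∧ isNNInt (c-a-β+(z:ℚ))
    then msign ((z : ℚ) + a - b - γ) /
      ((Nat.factorial z : ℝ) * hfact (a+b-c-(z:ℚ)) * hfact (c-b+α+(z:ℚ)) * hfact (b+β-(z:ℚ))
        * hfact (a-α-(z:ℚ)) * hfact (c-a-β+(z:ℚ)))
    else 0

/-- Admissibility of the arguments of a 3j symbol. -/
def threeJAdm (a b c α β γ : ℚ) : Prop :=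
  triAdm a b c ∧ |α| ≤ a ∧ |β| ≤ b ∧ |γ| ≤ c ∧ α + β + γ = 0 ∧
    (a - α).den = 1 ∧ (b - β).den = 1 ∧ (c - γ).den = 1

/-- The 6j symbol, via the Racah single-sum formula. -/
noncomputable def sixJ (a b c d e f : ℚ) : ℝ :=
  Real.sqrt (tri a b c * tri c d e * tri a e f * tri b d f) *
  ∑ z ∈ Finset.range (2 * (a+b+c+d+e+f).num.toNat + 2),
    if isNNInt ((z:ℚ)-a-b-c) ∧ isNNInt ((z:ℚ)-a-e-f) ∧ isNNInt (b+c+e+f-(z:ℚ)) ∧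
       isNNInt ((z:ℚ)-d-e-c) ∧ isNNInt ((z:ℚ)-b-d-f) ∧ isNNInt (a+b+d+e-(z:ℚ)) ∧
       isNNInt (a+c+f+d-(z:ℚ))
    then (-1:ℝ)^z * (Nat.factorial (z+1) : ℝ) /
      (hfact ((z:ℚ)-a-b-c) * hfact ((z:ℚ)-a-e-f) * hfact (b+c+e+f-(z:ℚ)) * hfact ((z:ℚ)-d-e-c)
        * hfact ((z:ℚ)-b-d-f) * hfact (a+b+d+e-(z:ℚ)) * hfact (a+c+f+d-(z:ℚ)))
    else 0

/-- Admissibility of the arguments of a 6j symbol {a b c; d e f}. -/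
def sixJAdm (a b c d e f : ℚ) : Prop :=
  triAdm a b c ∧ triAdm c d e ∧ triAdm a e f ∧ triAdm b d f

/-- The rotation matrix element `d^j_{m',m}(θ)`. -/
noncomputable def dmat (j m' m : ℚ) (θ : ℝ) : ℝ :=
  msign (j - m') * Real.sqrt (hfact (j+m') * hfact (j-m') * hfact (j+m) * hfact (j-m)) *
  ∑ k ∈ Finset.range ((2*j).num.toNat + 1),
    if isNNInt (j-m'-(k:ℚ)) ∧ isNNInt (j-m-(k:ℚ)) ∧ isNNInt (m'+m+(k:ℚ))
    then (-1:ℝ)^k * (Real.cos (θ/2))^((2*(k:ℚ)+m'+m).num.toNat)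
        * (Real.sin (θ/2))^((2*j-2*(k:ℚ)-m'-m).num.toNat)
      / ((Nat.factorial k : ℝ) * hfact (j-m'-(k:ℚ)) * hfact (j-m-(k:ℚ)) * hfact (m'+m+(k:ℚ)))
    else 0


-- ==================== auxiliary lemmas ====================

lemma num_toNat_of_eq {q : ℚ} {n : ℕ} (h : q = (n:ℚ)) : q.num.toNat = n := by
  subst h; simp

lemma hfact_eq_of {q : ℚ} {n : ℕ} (h : q = (n:ℚ)) : hfact q = n.factorial := by
  unfold hfact; rw [num_toNat_of_eq h]

lemma isNNInt_of_eq {q : ℚ} {n : ℕ} (h : q = (n:ℚ)) : isNNInt q := by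
  subst h; exact ⟨by positivity, by simp⟩

lemma not_isNNInt {q : ℚ} (h : q < 0) : ¬ isNNInt q := fun ⟨h0, _⟩ => absurd h (not_lt.mpr h0)

lemma int_of_den_one {q : ℚ} (h : q.den = 1) : ((q.num : ℚ)) = q := by
  rw [← Rat.num_div_den q, h]; simp

lemma nat_rep {q : ℚ} (hd : q.den = 1) (h0 : 0 ≤ q) : ∃ n : ℕ, q = (n:ℚ) := by
  refine ⟨q.num.toNat, ?_⟩
  have h1 : (0:ℤ) ≤ q.num := Rat.num_nonneg.mpr h0
  rw [← int_of_den_one hd]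
  exact_mod_cast (Int.toNat_of_nonneg h1).symm

lemma den_sub_one {x y : ℚ} (hx : x.den = 1) (hy : y.den = 1) : (x - y).den = 1 := by
  rw [← int_of_den_one hx, ← int_of_den_one hy]
  have : ((x.num : ℚ)) - y.num = ((x.num - y.num : ℤ) : ℚ) := by push_cast; ring
  rw [this, Rat.den_intCast]

lemma fact_ratio_le (u v n : ℕ) :
    (n+u).factorial * (n+v).factorial ≤ (n+u+v).factorial * n.factorial := by
  have h1 : (n+v).choose v * v.factorial * n.factorial = (n+v).factorial := by
    have := Nat.choose_mul_factorial_mul_factorial (Nat.le_add_left v n)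
    simpa [Nat.add_sub_cancel] using this
  have h2 : (n+u+v).choose v * v.factorial * (n+u).factorial = (n+u+v).factorial := by
    have := Nat.choose_mul_factorial_mul_factorial (Nat.le_add_left v (n+u))
    simpa [Nat.add_sub_cancel] using this
  have hc : (n+v).choose v ≤ (n+u+v).choose v := Nat.choose_le_choose v (by omega)
  calc (n+u).factorial * (n+v).factorial
      = ((n+v).choose v * v.factorial * n.factorial) * (n+u).factorial := by rw [h1]; ring
    _ ≤ ((n+u+v).choose v * v.factorial * n.factorial) * (n+u).factorial := by
        exact Nat.mul_le_mul_right _ (Nat.mul_le_mul_right _ (Nat.mul_le_mul_right _ hc))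
    _ = ((n+u+v).choose v * v.factorial * (n+u).factorial) * n.factorial := by ring
    _ = (n+u+v).factorial * n.factorial := by rw [h2]

lemma fact_ratio_strict (u v m n : ℕ) (hm : 1 ≤ m) :
    (n+u).factorial * (n+v).factorial * (n+1) ≤ (n+(u+v+m)).factorial * n.factorial := by
  have h3 : (n+u+v+1).factorial ≤ (n+(u+v+m)).factorial := Nat.factorial_le (by omega)
  have h4 : (n+u+v).factorial * (n+1) ≤ (n+u+v+1).factorial := by
    rw [Nat.factorial_succ, Nat.mul_comm]
    exact Nat.mul_le_mul_right _ (by omega)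
  calc (n+u).factorial * (n+v).factorial * (n+1)
      ≤ (n+u+v).factorial * n.factorial * (n+1) :=
        Nat.mul_le_mul_right _ (fact_ratio_le u v n)
    _ = ((n+u+v).factorial * (n+1)) * n.factorial := by ring
    _ ≤ (n+u+v+1).factorial * n.factorial := Nat.mul_le_mul_right _ h4
    _ ≤ (n+(u+v+m)).factorial * n.factorial := Nat.mul_le_mul_right _ h3

lemma fact_ratio_lower (u v n : ℕ) :
    (1 : ℝ) - (u*v)/(n+1) ≤ ((n+u).factorial * (n+v).factorial : ℝ) / ((n+u+v).factorial * n.factorial) := by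
  induction u with
  | zero =>
    have e : (n+0).factorial = n.factorial := by norm_num
    rw [e, show n+0+v = n+v from by omega, mul_comm ((n.factorial : ℝ)),
      div_self (by positivity : ((n+v).factorial * n.factorial : ℝ) ≠ 0)]
    simp
  | succ u ih =>
    have hfs : ((n+(u+1)).factorial : ℝ) = ((n:ℝ)+u+1) * (n+u).factorial := by
      rw [show n+(u+1) = (n+u)+1 from by omega, Nat.factorial_succ]; push_cast; ring
    have hfs2 : ((n+(u+1)+v).factorial : ℝ) = ((n:ℝ)+u+v+1) * (n+u+v).factorial := by
      rw [show n+(u+1)+v = (n+u+v)+1 from by omega, Nat.factorial_succ]; push_cast; ring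
    have hpos : (0:ℝ) < ((n+u+v).factorial * n.factorial : ℝ) := by positivity
    set S : ℝ := ((n+u).factorial * (n+v).factorial : ℝ) / ((n+u+v).factorial * n.factorial) with hS
    have hSnn : 0 ≤ S := by positivity
    have hstep : ((n+(u+1)).factorial * (n+v).factorial : ℝ) / ((n+(u+1)+v).factorial * n.factorial)
        = S * (((n:ℝ)+u+1)/((n:ℝ)+u+v+1)) := by
      rw [hfs, hfs2, hS]; field_simp
    rw [hstep]
    set a : ℝ := (u:ℝ)*v/((n:ℝ)+1) with ha
    set b : ℝ := (v:ℝ)/((n:ℝ)+1) with hb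
    have hann : 0 ≤ a := by positivity
    have hbnn : 0 ≤ b := by positivity
    have hsum : (1:ℝ) - ((u+1:ℕ):ℝ) * (v:ℝ) / ((n:ℝ)+1) = 1 - a - b := by
      rw [ha, hb]; push_cast; ring
    have hfac : (1:ℝ) - b ≤ ((n:ℝ)+u+1)/((n:ℝ)+u+v+1) := by
      have e : (1:ℝ) - (v:ℝ)/((n:ℝ)+u+v+1) = ((n:ℝ)+u+1)/((n:ℝ)+u+v+1) := by
        field_simp; ring
      have mono : (v:ℝ)/((n:ℝ)+u+v+1) ≤ (v:ℝ)/((n:ℝ)+1) := by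
        rw [div_le_div_iff₀ (by positivity) (by positivity)]
        nlinarith [Nat.cast_nonneg (α := ℝ) u, Nat.cast_nonneg (α := ℝ) v]
      rw [hb, ← e]; linarith
    have hfacnn : (0:ℝ) ≤ ((n:ℝ)+u+1)/((n:ℝ)+u+v+1) := by positivity
    rw [hsum]
    by_cases hc1 : (1:ℝ) - a ≤ 0
    · linarith [mul_nonneg hSnn hfacnn]
    · push_neg at hc1
      by_cases hc2 : (1:ℝ) - b ≤ 0
      · linarith [mul_nonneg hSnn hfacnn]
      · push_neg at hc2
        have key : ((1:ℝ) - a) * ((1:ℝ) - b) ≤ S * (((n:ℝ)+u+1)/((n:ℝ)+u+v+1)) := by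
          apply mul_le_mul ih hfac (by linarith) hSnn
        nlinarith [mul_nonneg hann hbnn]

lemma final_est (u v m r p n : ℕ) (θ θ' : ℝ) (ε : ℝ) (hε : 0 < ε)
    (heq : m = 0 → r = u ∧ p = v ∧ θ = θ')
    (hn1 : (u*v : ℝ) < ε * ((n:ℝ)+1))
    (hn2 : (r.factorial * p.factorial : ℝ) < ε^2 * ((n:ℝ)+1)) :
    |Real.sqrt ((r.factorial * p.factorial * (n+u).factorial * (n+v).factorial : ℝ) /
        (m.factorial * u.factorial * v.factorial * (n+(u+v+m)).factorial * n.factorial)) * Real.cos θ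
      - Real.cos θ' * (if m = 0 then (1:ℝ) else 0)| < ε := by
  have hn1' : (0:ℝ) < (n:ℝ)+1 := by positivity
  rcases Nat.eq_zero_or_pos m with hm | hm
  · obtain ⟨hr, hp, hθ⟩ := heq hm
    rw [hr, hp, hθ, hm]
    rw [if_pos rfl, mul_one]
    set R : ℝ := ((n+u).factorial * (n+v).factorial : ℝ) / ((n+u+v).factorial * n.factorial) with hR
    have hS : ((u.factorial * v.factorial * (n+u).factorial * (n+v).factorial : ℝ) /
        ((Nat.factorial 0) * u.factorial * v.factorial * (n+(u+v+0)).factorial * n.factorial)) = R := by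
      rw [hR, Nat.factorial_zero, show n+(u+v+0) = n+u+v from by omega]
      have h1 : ((n+u+v).factorial : ℝ) ≠ 0 := by positivity
      have h2 : (n.factorial : ℝ) ≠ 0 := by positivity
      have h3 : ((u.factorial : ℝ)) ≠ 0 := by positivity
      have h4 : ((v.factorial : ℝ)) ≠ 0 := by positivity
      field_simp
      ring
    rw [hS]
    have hRnn : 0 ≤ R := by positivity
    have hR1 : R ≤ 1 := by
      rw [hR, div_le_one (by positivity)]
      exact_mod_cast fact_ratio_le u v n
    have hlow : (1:ℝ) - (u*v)/((n:ℝ)+1) ≤ R := fact_ratio_lower u v n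
    have hsq1 : Real.sqrt R ≤ 1 := by
      rw [show (1:ℝ) = Real.sqrt 1 from (Real.sqrt_one).symm]; exact Real.sqrt_le_sqrt hR1
    have hsq2 : R ≤ Real.sqrt R := by
      nlinarith [Real.sq_sqrt hRnn, Real.sqrt_nonneg R]
    have hcos : |Real.cos θ'| ≤ 1 := Real.abs_cos_le_one θ'
    have habs : |Real.sqrt R * Real.cos θ' - Real.cos θ'| = |Real.cos θ'| * |1 - Real.sqrt R| := by
      have e : Real.sqrt R * Real.cos θ' - Real.cos θ' = Real.cos θ' * -(1 - Real.sqrt R) := by ring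
      rw [e, abs_mul, abs_neg]
    calc |Real.sqrt R * Real.cos θ' - Real.cos θ'|
        = |Real.cos θ'| * |1 - Real.sqrt R| := habs
      _ ≤ 1 * |1 - Real.sqrt R| := by
          apply mul_le_mul_of_nonneg_right hcos (abs_nonneg _)
      _ = 1 - Real.sqrt R := by rw [one_mul, abs_of_nonneg (by linarith)]
      _ ≤ (u*v)/((n:ℝ)+1) := by linarith
      _ < ε := by rw [div_lt_iff₀ hn1']; linarith [hn1]
  · have hm0 : ¬ (m = 0) := by omega
    rw [if_neg hm0, mul_zero, sub_zero, abs_mul]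
    set S : ℝ := ((r.factorial * p.factorial * (n+u).factorial * (n+v).factorial : ℝ) /
        (m.factorial * u.factorial * v.factorial * (n+(u+v+m)).factorial * n.factorial)) with hSdef
    have hSnn : 0 ≤ S := by positivity
    have hSle : S < ε^2 := by
      have hfs : ((n+u).factorial * (n+v).factorial : ℝ) * ((n:ℝ)+1) ≤
          ((n+(u+v+m)).factorial : ℝ) * (n.factorial : ℝ) := by
        exact_mod_cast fact_ratio_strict u v m n hm
      have h1le : (1:ℝ) ≤ (m.factorial : ℝ) * u.factorial * v.factorial := by
        have : 1 ≤ m.factorial * u.factorial * v.factorial :=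
          Nat.one_le_iff_ne_zero.mpr (by positivity)
        exact_mod_cast this
      have hD : ((n+u).factorial * (n+v).factorial : ℝ) * ((n:ℝ)+1) ≤
          (m.factorial : ℝ) * u.factorial * v.factorial * (n+(u+v+m)).factorial * n.factorial := by
        calc ((n+u).factorial * (n+v).factorial : ℝ) * ((n:ℝ)+1)
            ≤ ((n+(u+v+m)).factorial : ℝ) * (n.factorial : ℝ) := hfs
          _ = 1 * (((n+(u+v+m)).factorial : ℝ) * (n.factorial : ℝ)) := by ring
          _ ≤ ((m.factorial : ℝ) * u.factorial * v.factorial) * (((n+(u+v+m)).factorial : ℝ) * (n.factorial : ℝ)) := by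
              apply mul_le_mul_of_nonneg_right h1le (by positivity)
          _ = (m.factorial : ℝ) * u.factorial * v.factorial * (n+(u+v+m)).factorial * n.factorial := by ring
      rw [hSdef, div_lt_iff₀ (by positivity)]
      have hpos4 : (0:ℝ) < ((n+u).factorial : ℝ) * (n+v).factorial := by positivity
      calc ((r.factorial : ℝ) * p.factorial * (n+u).factorial * (n+v).factorial)
          = ((r.factorial : ℝ) * p.factorial) * ((n+u).factorial * (n+v).factorial : ℝ) := by ring
        _ < (ε^2*((n:ℝ)+1)) * ((n+u).factorial * (n+v).factorial : ℝ) := by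
            apply mul_lt_mul_of_pos_right ?_ hpos4
            exact_mod_cast hn2
        _ = ε^2 * (((n+u).factorial * (n+v).factorial : ℝ) * ((n:ℝ)+1)) := by ring
        _ ≤ ε^2 * ((m.factorial : ℝ) * u.factorial * v.factorial * (n+(u+v+m)).factorial * n.factorial) := by
            apply mul_le_mul_of_nonneg_left hD (by positivity)
    have hfin : Real.sqrt S < ε := by
      rw [show ε = Real.sqrt (ε^2) from by rw [Real.sqrt_sq hε.le]]
      exact Real.sqrt_lt_sqrt hSnn hSle
    calc |Real.sqrt S| * |Real.cos θ| ≤ |Real.sqrt S| * 1 :=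
          mul_le_mul_of_nonneg_left (Real.abs_cos_le_one θ) (abs_nonneg _)
      _ = Real.sqrt S := by rw [mul_one, abs_of_nonneg (Real.sqrt_nonneg S)]
      _ < ε := hfin

lemma closed1 (b β δ c : ℚ) (n u v m r p : ℕ)
    (hu : b + β = (u:ℚ)) (hv : b + δ = (v:ℚ)) (hm : -δ - β = (m:ℚ))
    (hr : b - δ = (r:ℚ)) (hp : b - β = (p:ℚ)) (hn : 2*c - δ - b = (n:ℚ)) :
    Real.sqrt (((c - δ : ℚ) : ℝ) + (b : ℝ) + (c : ℝ) + 1) * threeJ b (c - δ) c β (-β - c) c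
    = Real.sqrt ((r.factorial * p.factorial * (n+u).factorial * (n+v).factorial : ℝ) /
        (m.factorial * u.factorial * v.factorial * (n+(u+v+m)).factorial * n.factorial)) *
      Real.cos (((b - β - 2*c : ℚ) : ℝ) * Real.pi) := by
  have hrange : (b + (c - δ) + c).num.toNat = n + (u+v+m) := by
    apply num_toNat_of_eq; push_cast; linarith
  rw [threeJ, hrange]
  rw [Finset.sum_eq_single_of_mem m (Finset.mem_range.mpr (by omega)) ?side]
  case side =>
    intro z hz hne
    rw [if_neg]
    rintro ⟨h1, h2, h3, h4, h5⟩
    rcases lt_or_gt_of_ne hne with hlt | hgt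
    · have hzm : (z:ℚ) < (m:ℚ) := by exact_mod_cast hlt
      exact not_isNNInt (by linarith : c - (c - δ) + β + (z:ℚ) < 0) h2
    · have hzm : (m:ℚ) < (z:ℚ) := by exact_mod_cast hgt
      exact not_isNNInt (by linarith : (c - δ) + (-β - c) - (z:ℚ) < 0) h3
  rw [if_pos ⟨isNNInt_of_eq (show b + (c-δ) - c - (m:ℚ) = ((u:ℕ):ℚ) by push_cast; linarith),
      isNNInt_of_eq (show c - (c-δ) + β + (m:ℚ) = ((0:ℕ):ℚ) by push_cast; linarith),
      isNNInt_of_eq (show (c-δ) + (-β - c) - (m:ℚ) = ((0:ℕ):ℚ) by push_cast; linarith),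
      isNNInt_of_eq (show b - β - (m:ℚ) = ((v:ℕ):ℚ) by push_cast; linarith),
      isNNInt_of_eq (show c - b - (-β - c) + (m:ℚ) = ((n:ℕ):ℚ) by push_cast; linarith)⟩]
  rw [tri,
    hfact_eq_of (show b + (c-δ) - c = ((r:ℕ):ℚ) by push_cast; linarith),
    hfact_eq_of (show b - (c-δ) + c = ((v:ℕ):ℚ) by push_cast; linarith),
    hfact_eq_of (show -b + (c-δ) + c = ((n:ℕ):ℚ) by push_cast; linarith),
    hfact_eq_of (show b + (c-δ) + c + 1 = ((n+(u+v+m)+1 : ℕ):ℚ) by push_cast; linarith),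
    hfact_eq_of hu, hfact_eq_of hp,
    hfact_eq_of (show (c-δ) + (-β - c) = ((m:ℕ):ℚ) by push_cast; linarith),
    hfact_eq_of (show (c-δ) - (-β - c) = ((n+u : ℕ):ℚ) by push_cast; linarith),
    hfact_eq_of (show c + c = ((n+v : ℕ):ℚ) by push_cast; linarith),
    hfact_eq_of (show c - c = ((0:ℕ):ℚ) by push_cast; linarith),
    hfact_eq_of (show b + (c-δ) - c - (m:ℚ) = ((u:ℕ):ℚ) by push_cast; linarith),
    hfact_eq_of (show c - (c-δ) + β + (m:ℚ) = ((0:ℕ):ℚ) by push_cast; linarith),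
    hfact_eq_of (show (c-δ) + (-β - c) - (m:ℚ) = ((0:ℕ):ℚ) by push_cast; linarith),
    hfact_eq_of (show b - β - (m:ℚ) = ((v:ℕ):ℚ) by push_cast; linarith),
    hfact_eq_of (show c - b - (-β - c) + (m:ℚ) = ((n:ℕ):ℚ) by push_cast; linarith)]
  rw [msign, show ((m:ℚ) + b - (c-δ) - c : ℚ) = (b - β - 2*c : ℚ) by linarith]
  have hnR : 2*(c:ℝ) - (δ:ℝ) - (b:ℝ) = (n:ℕ) := by exact_mod_cast congrArg (fun q : ℚ => (q:ℝ)) hn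
  have huR : (b:ℝ) + (β:ℝ) = (u:ℕ) := by exact_mod_cast congrArg (fun q : ℚ => (q:ℝ)) hu
  have hvR : (b:ℝ) + (δ:ℝ) = (v:ℕ) := by exact_mod_cast congrArg (fun q : ℚ => (q:ℝ)) hv
  have hmR : -(δ:ℝ) - (β:ℝ) = (m:ℕ) := by exact_mod_cast congrArg (fun q : ℚ => (q:ℝ)) hm
  rw [show (((c - δ : ℚ) : ℝ) + (b : ℝ) + (c : ℝ) + 1) = ((n+(u+v+m)+1 : ℕ):ℝ) by push_cast; linarith]
  rw [← mul_assoc, ← Real.sqrt_mul (by positivity : (0:ℝ) ≤ ((n+(u+v+m)+1 : ℕ):ℝ))]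
  have hDpos : (0:ℝ) < (m.factorial : ℝ) * u.factorial * (Nat.factorial 0) * (Nat.factorial 0) * v.factorial * n.factorial := by positivity
  have hSnn : (0:ℝ) ≤ (r.factorial * p.factorial * (n+u).factorial * (n+v).factorial : ℝ) /
      (m.factorial * u.factorial * v.factorial * (n+(u+v+m)).factorial * n.factorial) := by positivity
  have hsucc : ((n+(u+v+m)+1).factorial : ℝ) = ((n+(u+v+m)+1 : ℕ):ℝ) * ((n+(u+v+m)).factorial : ℝ) := by
    exact_mod_cast Nat.factorial_succ (n+(u+v+m))
  have hArg : ((n+(u+v+m)+1 : ℕ):ℝ) *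
      ((r.factorial : ℝ) * v.factorial * n.factorial / ((n+(u+v+m)+1).factorial : ℝ) * u.factorial *
        p.factorial * m.factorial * (n+u).factorial * (n+v).factorial * (Nat.factorial 0 : ℕ))
      = ((r.factorial * p.factorial * (n+u).factorial * (n+v).factorial : ℝ) /
          (m.factorial * u.factorial * v.factorial * (n+(u+v+m)).factorial * n.factorial)) *
        ((m.factorial : ℝ) * u.factorial * (Nat.factorial 0) * (Nat.factorial 0) * v.factorial * n.factorial)^2 := by
    rw [hsucc, Nat.factorial_zero]
    have h1 : ((n+(u+v+m)).factorial : ℝ) ≠ 0 := by positivity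
    have h2 : ((n+(u+v+m)+1 : ℕ):ℝ) ≠ 0 := by positivity
    have h3 : (m.factorial : ℝ) ≠ 0 := by positivity
    have h4 : (u.factorial : ℝ) ≠ 0 := by positivity
    have h5 : (v.factorial : ℝ) ≠ 0 := by positivity
    have h6 : (n.factorial : ℝ) ≠ 0 := by positivity
    field_simp
    ring
  rw [hArg, Real.sqrt_mul hSnn, Real.sqrt_sq hDpos.le]
  field_simp

lemma closed2 (b β δ c : ℚ) (n u v m2 r p : ℕ)
    (hu : b + β = (u:ℚ)) (hv : b + δ = (v:ℚ)) (hm : β - δ = (m2:ℚ))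
    (hr : b - δ = (r:ℚ)) (hp : b - β = (p:ℚ)) (hn : 2*c - δ - b = (n:ℚ)) :
    Real.sqrt (((c - δ : ℚ) : ℝ) + (b : ℝ) + (c : ℝ) + 1) * threeJ b (c - δ) c β (-β + c) (-c)
    = Real.sqrt ((r.factorial * u.factorial * (n+p).factorial * (n+v).factorial : ℝ) /
        (m2.factorial * p.factorial * v.factorial * (n+(p+v+m2)).factorial * n.factorial)) *
      Real.cos (((2*b + δ - β : ℚ) : ℝ) * Real.pi) := by
  have hrange : (b + (c - δ) + c).num.toNat = n + (p+v+m2) := by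
    apply num_toNat_of_eq; push_cast; linarith
  rw [threeJ, hrange]
  rw [Finset.sum_eq_single_of_mem p (Finset.mem_range.mpr (by omega)) ?side]
  case side =>
    intro z hz hne
    rw [if_neg]
    rintro ⟨h1, h2, h3, h4, h5⟩
    rcases lt_or_gt_of_ne hne with hlt | hgt
    · have hzm : (z:ℚ) < (p:ℚ) := by exact_mod_cast hlt
      exact not_isNNInt (by linarith : c - b - (-β + c) + (z:ℚ) < 0) h5
    · have hzm : (p:ℚ) < (z:ℚ) := by exact_mod_cast hgt
      exact not_isNNInt (by linarith : b - β - (z:ℚ) < 0) h4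
  rw [if_pos ⟨isNNInt_of_eq (show b + (c-δ) - c - (p:ℚ) = ((m2:ℕ):ℚ) by push_cast; linarith),
      isNNInt_of_eq (show c - (c-δ) + β + (p:ℚ) = ((v:ℕ):ℚ) by push_cast; linarith),
      isNNInt_of_eq (show (c-δ) + (-β + c) - (p:ℚ) = ((n:ℕ):ℚ) by push_cast; linarith),
      isNNInt_of_eq (show b - β - (p:ℚ) = ((0:ℕ):ℚ) by push_cast; linarith),
      isNNInt_of_eq (show c - b - (-β + c) + (p:ℚ) = ((0:ℕ):ℚ) by push_cast; linarith)⟩]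
  rw [tri,
    hfact_eq_of (show b + (c-δ) - c = ((r:ℕ):ℚ) by push_cast; linarith),
    hfact_eq_of (show b - (c-δ) + c = ((v:ℕ):ℚ) by push_cast; linarith),
    hfact_eq_of (show -b + (c-δ) + c = ((n:ℕ):ℚ) by push_cast; linarith),
    hfact_eq_of (show b + (c-δ) + c + 1 = ((n+(p+v+m2)+1 : ℕ):ℚ) by push_cast; linarith),
    hfact_eq_of hu, hfact_eq_of hp,
    hfact_eq_of (show (c-δ) + (-β + c) = ((n+p : ℕ):ℚ) by push_cast; linarith),
    hfact_eq_of (show (c-δ) - (-β + c) = ((m2:ℕ):ℚ) by push_cast; linarith),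
    hfact_eq_of (show c + -c = ((0:ℕ):ℚ) by push_cast; linarith),
    hfact_eq_of (show c - -c = ((n+v : ℕ):ℚ) by push_cast; linarith),
    hfact_eq_of (show b + (c-δ) - c - (p:ℚ) = ((m2:ℕ):ℚ) by push_cast; linarith),
    hfact_eq_of (show c - (c-δ) + β + (p:ℚ) = ((v:ℕ):ℚ) by push_cast; linarith),
    hfact_eq_of (show (c-δ) + (-β + c) - (p:ℚ) = ((n:ℕ):ℚ) by push_cast; linarith),
    hfact_eq_of (show b - β - (p:ℚ) = ((0:ℕ):ℚ) by push_cast; linarith),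
    hfact_eq_of (show c - b - (-β + c) + (p:ℚ) = ((0:ℕ):ℚ) by push_cast; linarith)]
  rw [msign, show ((p:ℚ) + b - (c-δ) - -c : ℚ) = (2*b + δ - β : ℚ) by linarith]
  have hnR : 2*(c:ℝ) - (δ:ℝ) - (b:ℝ) = (n:ℕ) := by exact_mod_cast congrArg (fun q : ℚ => (q:ℝ)) hn
  have huR : (b:ℝ) + (β:ℝ) = (u:ℕ) := by exact_mod_cast congrArg (fun q : ℚ => (q:ℝ)) hu
  have hvR : (b:ℝ) + (δ:ℝ) = (v:ℕ) := by exact_mod_cast congrArg (fun q : ℚ => (q:ℝ)) hv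
  have hmR : (β:ℝ) - (δ:ℝ) = (m2:ℕ) := by exact_mod_cast congrArg (fun q : ℚ => (q:ℝ)) hm
  have hpR : (b:ℝ) - (β:ℝ) = (p:ℕ) := by exact_mod_cast congrArg (fun q : ℚ => (q:ℝ)) hp
  rw [show (((c - δ : ℚ) : ℝ) + (b : ℝ) + (c : ℝ) + 1) = ((n+(p+v+m2)+1 : ℕ):ℝ) by push_cast; linarith]
  rw [← mul_assoc, ← Real.sqrt_mul (by positivity : (0:ℝ) ≤ ((n+(p+v+m2)+1 : ℕ):ℝ))]
  have hDpos : (0:ℝ) < (p.factorial : ℝ) * m2.factorial * v.factorial * n.factorial * (Nat.factorial 0) * (Nat.factorial 0) := by positivity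
  have hSnn : (0:ℝ) ≤ (r.factorial * u.factorial * (n+p).factorial * (n+v).factorial : ℝ) /
      (m2.factorial * p.factorial * v.factorial * (n+(p+v+m2)).factorial * n.factorial) := by positivity
  have hsucc : ((n+(p+v+m2)+1).factorial : ℝ) = ((n+(p+v+m2)+1 : ℕ):ℝ) * ((n+(p+v+m2)).factorial : ℝ) := by
    exact_mod_cast Nat.factorial_succ (n+(p+v+m2))
  have hArg : ((n+(p+v+m2)+1 : ℕ):ℝ) *
      ((r.factorial : ℝ) * v.factorial * n.factorial / ((n+(p+v+m2)+1).factorial : ℝ) * u.factorial *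
        p.factorial * (n+p).factorial * m2.factorial * (Nat.factorial 0 : ℕ) * (n+v).factorial)
      = ((r.factorial * u.factorial * (n+p).factorial * (n+v).factorial : ℝ) /
          (m2.factorial * p.factorial * v.factorial * (n+(p+v+m2)).factorial * n.factorial)) *
        ((p.factorial : ℝ) * m2.factorial * v.factorial * n.factorial * (Nat.factorial 0) * (Nat.factorial 0))^2 := by
    rw [hsucc, Nat.factorial_zero]
    have h1 : ((n+(p+v+m2)).factorial : ℝ) ≠ 0 := by positivity
    have h2 : ((n+(p+v+m2)+1 : ℕ):ℝ) ≠ 0 := by positivity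
    have h3 : (m2.factorial : ℝ) ≠ 0 := by positivity
    have h4 : (p.factorial : ℝ) ≠ 0 := by positivity
    have h5 : (v.factorial : ℝ) ≠ 0 := by positivity
    have h6 : (n.factorial : ℝ) ≠ 0 := by positivity
    field_simp
    ring
  rw [hArg, Real.sqrt_mul hSnn, Real.sqrt_sq hDpos.le]
  field_simp


lemma main1 (b β δ : ℚ) (hb : isHalfInt b) (hβb : |β| ≤ b) (hδb : |δ| ≤ b)
    (hbβ : (b - β).den = 1) (hbδ : (b - δ).den = 1) (ε : ℝ) (hε : 0 < ε) :
    ∃ C : ℚ, ∀ c : ℚ, C ≤ c → threeJAdm b (c - δ) c β (-β - c) c →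
      |Real.sqrt (((c - δ : ℚ) : ℝ) + (b : ℝ) + (c : ℝ) + 1) *
          threeJ b (c - δ) c β (-β - c) c
        - msign (-(c - δ) + b - c) * (if -β - c = -(c - δ) then (1:ℝ) else 0)| < ε := by
  by_cases hcase : β ≤ -δ
  case neg =>
    push_neg at hcase
    refine ⟨-β, fun c hc adm => ?_⟩
    exfalso
    obtain ⟨-, -, hβ', -⟩ := adm
    have h1 : -β - c ≤ 0 := by linarith
    rw [abs_of_nonpos h1] at hβ'
    linarith
  case pos =>
    have hβlow : -b ≤ β := (abs_le.mp hβb).1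
    have hδlow : -b ≤ δ := (abs_le.mp hδb).1
    have hδhigh : δ ≤ b := (abs_le.mp hδb).2
    have hβhigh : β ≤ b := (abs_le.mp hβb).2
    have hbb : (2*b).den = 1 := hb
    have hduβ : (b+β).den = 1 := by
      rw [show b + β = 2*b - (b - β) from by ring]; exact den_sub_one hbb hbβ
    have hduδ : (b+δ).den = 1 := by
      rw [show b + δ = 2*b - (b - δ) from by ring]; exact den_sub_one hbb hbδ
    have hdm : (-δ - β).den = 1 := by
      rw [show -δ - β = (b - β) - (b + δ) from by ring]; exact den_sub_one hbβ hduδ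
    obtain ⟨u, hu⟩ := nat_rep hduβ (by linarith)
    obtain ⟨v, hv⟩ := nat_rep hduδ (by linarith)
    obtain ⟨m, hmq⟩ := nat_rep hdm (by linarith)
    obtain ⟨r, hrq⟩ := nat_rep hbδ (by linarith)
    obtain ⟨p, hpq⟩ := nat_rep hbβ (by linarith)
    obtain ⟨q1, hq1⟩ := exists_rat_gt (max ((u*v : ℝ)/ε) ((r.factorial*p.factorial : ℝ)/ε^2))
    refine ⟨(q1 + δ + b)/2, fun c hc adm => ?_⟩
    obtain ⟨htri, hα, hβ', hγ, hzero, hd1, hd2, hd3⟩ := adm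
    have hdn : (2*c - δ - b).den = 1 := by
      rw [show 2*c - δ - b = (b + (c - δ) + c) - 2*b from by ring]
      exact den_sub_one htri.2.2.2.2.2.2 hbb
    have hnn : (0:ℚ) ≤ 2*c - δ - b := by
      have := htri.2.2.2.2.1
      linarith
    obtain ⟨n, hnq⟩ := nat_rep hdn hnn
    have hnbig : (q1:ℚ) ≤ (n:ℚ) := by rw [← hnq]; linarith
    have hnbigR : (q1:ℝ) ≤ (n:ℝ) := by exact_mod_cast hnbig
    rw [closed1 b β δ c n u v m r p hu hv hmq hrq hpq hnq]
    have hind : (if -β - c = -(c - δ) then (1:ℝ) else 0) = (if m = 0 then (1:ℝ) else 0) := by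
      by_cases h0 : m = 0
      · rw [if_pos h0, if_pos]
        have hm0 : (m:ℚ) = 0 := by exact_mod_cast h0
        linarith [hmq, hm0]
      · rw [if_neg h0, if_neg]
        intro hcon
        apply h0
        have : (m:ℚ) = 0 := by rw [← hmq]; linarith
        exact_mod_cast this
    rw [hind, msign]
    have hq1a : (u*v:ℝ)/ε < q1 := lt_of_le_of_lt (le_max_left _ _) hq1
    have hq1b : (r.factorial*p.factorial:ℝ)/ε^2 < q1 := lt_of_le_of_lt (le_max_right _ _) hq1
    rw [div_lt_iff₀ hε] at hq1a
    rw [div_lt_iff₀ (by positivity)] at hq1b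
    apply final_est u v m r p n _ _ ε hε
    · intro h0
      have hm0 : (m:ℚ) = 0 := by exact_mod_cast h0
      refine ⟨?_, ?_, ?_⟩
      · have : (r:ℚ) = (u:ℚ) := by rw [← hrq, ← hu]; linarith [hmq, hm0]
        exact_mod_cast this
      · have : (p:ℚ) = (v:ℚ) := by rw [← hpq, ← hv]; linarith [hmq, hm0]
        exact_mod_cast this
      · have e : (b - β - 2*c : ℚ) = (-(c-δ) + b - c : ℚ) := by linarith [hmq, hm0]
        rw [e]
    · nlinarith [hε.le]
    · nlinarith [hε.le, sq_nonneg ε]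

lemma main2 (b β δ : ℚ) (hb : isHalfInt b) (hβb : |β| ≤ b) (hδb : |δ| ≤ b)
    (hbβ : (b - β).den = 1) (hbδ : (b - δ).den = 1) (ε : ℝ) (hε : 0 < ε) :
    ∃ C : ℚ, ∀ c : ℚ, C ≤ c → threeJAdm b (c - δ) c β (-β + c) (-c) →
      |Real.sqrt (((c - δ : ℚ) : ℝ) + (b : ℝ) + (c : ℝ) + 1) *
          threeJ b (c - δ) c β (-β + c) (-c)
        - msign (2*b + δ - β) * (if -β + c = c - δ then (1:ℝ) else 0)| < ε := by
  by_cases hcase : δ ≤ β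
  case neg =>
    push_neg at hcase
    refine ⟨β, fun c hc adm => ?_⟩
    exfalso
    obtain ⟨-, -, hβ', -⟩ := adm
    have h1 : 0 ≤ -β + c := by linarith
    rw [abs_of_nonneg h1] at hβ'
    linarith
  case pos =>
    have hβlow : -b ≤ β := (abs_le.mp hβb).1
    have hδlow : -b ≤ δ := (abs_le.mp hδb).1
    have hδhigh : δ ≤ b := (abs_le.mp hδb).2
    have hβhigh : β ≤ b := (abs_le.mp hβb).2
    have hbb : (2*b).den = 1 := hb
    have hduβ : (b+β).den = 1 := by
      rw [show b + β = 2*b - (b - β) from by ring]; exact den_sub_one hbb hbβ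
    have hduδ : (b+δ).den = 1 := by
      rw [show b + δ = 2*b - (b - δ) from by ring]; exact den_sub_one hbb hbδ
    have hdm : (β - δ).den = 1 := by
      rw [show β - δ = (b - δ) - (b - β) from by ring]; exact den_sub_one hbδ hbβ
    obtain ⟨u, hu⟩ := nat_rep hduβ (by linarith)
    obtain ⟨v, hv⟩ := nat_rep hduδ (by linarith)
    obtain ⟨m2, hmq⟩ := nat_rep hdm (by linarith)
    obtain ⟨r, hrq⟩ := nat_rep hbδ (by linarith)
    obtain ⟨p, hpq⟩ := nat_rep hbβ (by linarith)
    obtain ⟨q1, hq1⟩ := exists_rat_gt (max ((p*v : ℝ)/ε) ((r.factorial*u.factorial : ℝ)/ε^2))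
    refine ⟨(q1 + δ + b)/2, fun c hc adm => ?_⟩
    obtain ⟨htri, hα, hβ', hγ, hzero, hd1, hd2, hd3⟩ := adm
    have hdn : (2*c - δ - b).den = 1 := by
      rw [show 2*c - δ - b = (b + (c - δ) + c) - 2*b from by ring]
      exact den_sub_one htri.2.2.2.2.2.2 hbb
    have hnn : (0:ℚ) ≤ 2*c - δ - b := by
      have := htri.2.2.2.2.1
      linarith
    obtain ⟨n, hnq⟩ := nat_rep hdn hnn
    have hnbig : (q1:ℚ) ≤ (n:ℚ) := by rw [← hnq]; linarith
    have hnbigR : (q1:ℝ) ≤ (n:ℝ) := by exact_mod_cast hnbig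
    rw [closed2 b β δ c n u v m2 r p hu hv hmq hrq hpq hnq]
    have hind : (if -β + c = c - δ then (1:ℝ) else 0) = (if m2 = 0 then (1:ℝ) else 0) := by
      by_cases h0 : m2 = 0
      · rw [if_pos h0, if_pos]
        have hm0 : (m2:ℚ) = 0 := by exact_mod_cast h0
        linarith [hmq, hm0]
      · rw [if_neg h0, if_neg]
        intro hcon
        apply h0
        have : (m2:ℚ) = 0 := by rw [← hmq]; linarith
        exact_mod_cast this
    rw [hind, msign]
    have hq1a : (p*v:ℝ)/ε < q1 := lt_of_le_of_lt (le_max_left _ _) hq1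
    have hq1b : (r.factorial*u.factorial:ℝ)/ε^2 < q1 := lt_of_le_of_lt (le_max_right _ _) hq1
    rw [div_lt_iff₀ hε] at hq1a
    rw [div_lt_iff₀ (by positivity)] at hq1b
    apply final_est p v m2 r u n _ _ ε hε
    · intro h0
      have hm0 : (m2:ℚ) = 0 := by exact_mod_cast h0
      refine ⟨?_, ?_, rfl⟩
      · have : (r:ℚ) = (p:ℚ) := by rw [← hrq, ← hpq]; linarith [hmq, hm0]
        exact_mod_cast this
      · have : (u:ℚ) = (v:ℚ) := by rw [← hu, ← hv]; linarith [hmq, hm0]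
        exact_mod_cast this
    · nlinarith [hε.le]
    · nlinarith [hε.le, sq_nonneg ε]

/-- Theorem 2: the boundary cases `γ = c` and `γ = -c`. -/
theorem stmt_7 (b β δ : ℚ) (hb : isHalfInt b) (hβ : isHalfInt β) (hδ : isHalfInt δ)
    (hβb : |β| ≤ b) (hδb : |δ| ≤ b) (hbβ : (b - β).den = 1) (hbδ : (b - δ).den = 1) :
    ∀ ε : ℝ, 0 < ε → ∃ C : ℚ, ∀ c : ℚ, C ≤ c →
      (threeJAdm b (c - δ) c β (-β - c) c →
        |Real.sqrt (((c - δ : ℚ) : ℝ) + (b : ℝ) + (c : ℝ) + 1) *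
            threeJ b (c - δ) c β (-β - c) c
          - msign (-(c - δ) + b - c) * (if -β - c = -(c - δ) then (1:ℝ) else 0)| < ε)
      ∧ (threeJAdm b (c - δ) c β (-β + c) (-c) →
        |Real.sqrt (((c - δ : ℚ) : ℝ) + (b : ℝ) + (c : ℝ) + 1) *
            threeJ b (c - δ) c β (-β + c) (-c)
          - msign (2*b + δ - β) * (if -β + c = c - δ then (1:ℝ) else 0)| < ε) := by


  intro ε hε
  obtain ⟨C1, h1⟩ := main1 b β δ hb hβb hδb hbβ hbδ ε hε
  obtain ⟨C2, h2⟩ := main2 b β δ hb hβb hδb hbβ hbδ ε hε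
  refine ⟨max C1 C2, fun c hc => ⟨?_, ?_⟩⟩
  · exact h1 c (le_trans (le_max_left _ _) hc)
  · exact h2 c (le_trans (le_max_right _ _) hc)
end

section
/- Fix half-integers f, m, n with |m| ≤ f, |n| ≤ f, and fix positive reals a₀, b₀, c₀ satisfying the strict triangle inequalities. Let a = λa₀, b = λb₀, c = λc₀ with λ → ∞ through values making all entries admissible half-integers. Then √(ω_a ω_b) · { c b a ; f a+n b+m } − (−1)^(a+b+c+f+m) · d^f_{nm}(φ) → 0, where ω_a = 2a+n+f+1, ω_b = 2b+m+f+1, and cos φ = [(a+n+1/2)² + (b+m+1/2)² − (c+1/2)²] / [2(a+n+1/2)(b+m+1/2)]. -/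
open Real Filter

namespace Aux
open Real Filter Topology Finset

lemma den1_iff (q : ℚ) : q.den = 1 ↔ ∃ z : ℤ, q = (z:ℚ) := by
  constructor
  · intro h; exact ⟨q.num, (Rat.coe_int_num_of_den_eq_one h).symm⟩
  · rintro ⟨z, rfl⟩; exact Rat.den_intCast z

lemma exists_nat_eq (q : ℚ) (h1 : q.den = 1) (h0 : 0 ≤ q) : ∃ N : ℕ, (N : ℚ) = q := by
  obtain ⟨z, rfl⟩ := (den1_iff q).mp h1
  lift z to ℕ using (by exact_mod_cast h0)
  exact ⟨z, by norm_cast⟩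

lemma num_toNat_eq (N : ℕ) (q : ℚ) (h : (N : ℚ) = q) : q.num.toNat = N := by
  subst h; simp

lemma hfact_nat (N : ℕ) (q : ℚ) (h : (N : ℚ) = q) : hfact q = (Nat.factorial N : ℝ) := by
  rw [hfact, num_toNat_eq N q h]

lemma msign_int (z : ℤ) (q : ℚ) (h : (z:ℚ) = q) : msign q = (-1 : ℝ)^z := by
  subst h
  rw [msign]
  have := Real.cos_add_int_mul_pi 0 z
  simpa using this

lemma msign_half (z : ℤ) (q : ℚ) (h : (2*z+1 :ℚ) = 2*q) : msign q = 0 := by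
  have hq : (q:ℝ) = (z:ℝ) + 1/2 := by
    have h2 : ((2*z+1 : ℚ):ℝ) = ((2*q : ℚ):ℝ) := by rw [h]
    push_cast at h2
    linarith
  rw [msign, hq, add_mul, add_comm]
  rw [show ((1:ℝ)/2 * π) = π/2 by ring]
  rw [Real.cos_add_int_mul_pi, Real.cos_pi_div_two, mul_zero]

lemma abs_sqrt_sub_sqrt (a b : ℝ) (ha : 0 ≤ a) (hb : 0 ≤ b) :
    |Real.sqrt a - Real.sqrt b| ≤ Real.sqrt |a - b| := by
  rcases le_total b a with h | h
  · rw [abs_of_nonneg (sub_nonneg.mpr h),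
      abs_of_nonneg (sub_nonneg.mpr (Real.sqrt_le_sqrt h))]
    nlinarith [Real.sq_sqrt ha, Real.sq_sqrt hb, Real.sq_sqrt (by linarith : (0:ℝ) ≤ a - b),
      Real.sqrt_nonneg a, Real.sqrt_nonneg b, Real.sqrt_nonneg (a-b),
      mul_nonneg (Real.sqrt_nonneg b) (Real.sqrt_nonneg (a-b))]
  · rw [abs_of_nonpos (sub_nonpos.mpr h),
      abs_of_nonpos (sub_nonpos.mpr (Real.sqrt_le_sqrt h)), show -(a-b) = b - a by ring]
    nlinarith [Real.sq_sqrt ha, Real.sq_sqrt hb, Real.sq_sqrt (by linarith : (0:ℝ) ≤ b - a),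
      Real.sqrt_nonneg a, Real.sqrt_nonneg b, Real.sqrt_nonneg (b-a),
      mul_nonneg (Real.sqrt_nonneg a) (Real.sqrt_nonneg (b-a))]

lemma lin_ratio_tendsto (S c₁ c₂ : ℝ) (hS : 0 < S) (l : ℕ → ℝ) (hl : Tendsto l atTop atTop)
    (u v : ℕ → ℝ) (hu : ∀ᶠ j in atTop, u j = S * l j + c₁) (hv : ∀ᶠ j in atTop, v j = S * l j + c₂) :
    Tendsto (fun j => u j / v j) atTop (nhds 1) := by
  have hD : Tendsto (fun j => S * l j + c₂) atTop atTop :=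
    (hl.const_mul_atTop hS).atTop_add tendsto_const_nhds
  have h0 : Tendsto (fun j => (c₁ - c₂)/(S * l j + c₂)) atTop (nhds 0) :=
    tendsto_const_nhds.div_atTop hD
  have h1 := h0.const_add (1:ℝ)
  rw [add_zero] at h1
  refine h1.congr' ?_
  filter_upwards [hD.eventually_gt_atTop 0, hu, hv] with j hj hju hjv
  rw [hju, hjv]
  field_simp
  ring

lemma fact_ratio_prod (N d : ℕ) :
    ((Nat.factorial (N + d) : ℝ)) / (Nat.factorial N) = ∏ i ∈ Finset.range d, ((N:ℝ) + 1 + i) := by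
  induction d with
  | zero => simp [div_self (by positivity : (Nat.factorial N : ℝ) ≠ 0)]
  | succ d ih =>
    rw [Finset.prod_range_succ, ← ih]
    have h : (Nat.factorial N : ℝ) ≠ 0 := by positivity
    have h2 : (Nat.factorial (N + (d+1)) : ℝ) = (Nat.factorial (N+d)) * ((N:ℝ)+1+d) := by
      have h3 : N + (d+1) = (N+d) + 1 := by ring
      rw [h3, Nat.factorial_succ]
      push_cast; ring
    rw [h2]
    field_simp

/-- ratio of factorial quotient to a matching power tends to 1 -/
lemma asc_div_pow_tendsto (d : ℕ) (S cN cW : ℝ) (hS : 0 < S) (l : ℕ → ℝ)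
    (hl : Tendsto l atTop atTop) (N : ℕ → ℕ) (W : ℕ → ℝ)
    (hN : ∀ᶠ j in atTop, (N j : ℝ) = S * l j + cN) (hW : ∀ᶠ j in atTop, W j = S * l j + cW) :
    Tendsto (fun j => (Nat.factorial (N j + d) : ℝ)/(Nat.factorial (N j)) / (W j)^d)
      atTop (nhds 1) := by
  have key : ∀ᶠ j in atTop, (Nat.factorial (N j + d) : ℝ)/(Nat.factorial (N j)) / (W j)^d
      = ∏ i ∈ Finset.range d, (((N j : ℝ) + 1 + i) / W j) := by
    filter_upwards [hW, (hl.const_mul_atTop hS).eventually_gt_atTop (-cW)] with j hjW hj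
    have hWpos : 0 < W j := by rw [hjW]; linarith
    rw [fact_ratio_prod, Finset.prod_div_distrib, Finset.prod_const, Finset.card_range]
  have lim : Tendsto (fun j => ∏ i ∈ Finset.range d, (((N j : ℝ) + 1 + i) / W j))
      atTop (nhds 1) := by
    have : Tendsto (fun j => ∏ i ∈ Finset.range d, (((N j : ℝ) + 1 + i) / W j))
        atTop (nhds (∏ _i ∈ Finset.range d, (1:ℝ))) := by
      refine tendsto_finset_prod _ (fun i _ => ?_)
      exact lin_ratio_tendsto S (cN + 1 + i) cW hS l hl _ _
        (by filter_upwards [hN] with j hj; rw [hj]; ring) hW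
    simpa using this
  refine lim.congr' ?_
  filter_upwards [key] with j hj
  exact hj.symm

/-- the key sqrt-comparison limit -/
lemma key_sqrt (R T G : ℕ → ℝ) (hT0 : ∀ᶠ j in atTop, 0 ≤ T j) (hT1 : ∀ᶠ j in atTop, T j ≤ 1)
    (hRT : ∀ᶠ j in atTop, R j = (T j)^2 * G j) (hG : Tendsto G atTop (nhds 1)) :
    Tendsto (fun j => |Real.sqrt (R j) - T j|) atTop (nhds 0) := by
  have hGm : Tendsto (fun j => Real.sqrt (|G j - 1|)) atTop (nhds 0) := by
    have h1 : Tendsto (fun j => |G j - 1|) atTop (nhds 0) := by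
      have := (hG.sub_const 1).abs
      simpa using this
    have := (Real.continuous_sqrt.tendsto 0).comp h1
    simpa [Function.comp_def] using this
  refine squeeze_zero' (by filter_upwards with j; positivity) ?_ hGm
  filter_upwards [hT0, hT1, hRT,
    hG.eventually (eventually_gt_nhds (by norm_num : (0:ℝ) < 1))] with j h0 h1 hrt hg
  have hR0 : 0 ≤ (T j)^2 * G j := by positivity
  calc |Real.sqrt (R j) - T j| = |Real.sqrt (R j) - Real.sqrt ((T j)^2)| := by
        rw [Real.sqrt_sq h0]
    _ ≤ Real.sqrt (|R j - (T j)^2|) := abs_sqrt_sub_sqrt _ _ (by rw [hrt]; exact hR0) (sq_nonneg _)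
    _ ≤ Real.sqrt (|G j - 1|) := by
        apply Real.sqrt_le_sqrt
        rw [hrt, show (T j)^2 * G j - (T j)^2 = (T j)^2 * (G j - 1) by ring, abs_mul,
          abs_of_nonneg (sq_nonneg (T j))]
        have hT2 : (T j)^2 ≤ 1 := by nlinarith
        nlinarith [mul_nonneg (abs_nonneg (G j - 1)) (sub_nonneg.mpr hT2)]
        
lemma toNat_spec (q : ℚ) (h1 : q.den = 1) (h0 : 0 ≤ q) : ((q.num.toNat : ℕ) : ℚ) = q := by
  obtain ⟨N, hN⟩ := exists_nat_eq q h1 h0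
  rw [num_toNat_eq N q hN, hN]

lemma hfact_pos (q : ℚ) : 0 < hfact q := by rw [hfact]; positivity

end Aux

namespace Aux2
open Real Filter Topology Finset Aux

lemma arccos_sq (x y zc : ℝ) (hx : 0 < x) (hy : 0 < y)
    (hW1 : 0 < x + y + zc) (hW2 : 0 < x + y - zc) (hW3 : 0 < zc - x + y) (hW4 : 0 < zc + x - y) :
    Real.cos (Real.arccos ((x^2 + y^2 - zc^2)/(2*x*y)) / 2)^2
        = (x + y + zc) * (x + y - zc) / (4*(x*y)) ∧
    Real.sin (Real.arccos ((x^2 + y^2 - zc^2)/(2*x*y)) / 2)^2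
        = (zc - x + y) * (zc + x - y) / (4*(x*y)) ∧
    0 ≤ Real.cos (Real.arccos ((x^2 + y^2 - zc^2)/(2*x*y)) / 2) ∧
    0 ≤ Real.sin (Real.arccos ((x^2 + y^2 - zc^2)/(2*x*y)) / 2) ∧
    Real.cos (Real.arccos ((x^2 + y^2 - zc^2)/(2*x*y)) / 2) ≤ 1 ∧
    Real.sin (Real.arccos ((x^2 + y^2 - zc^2)/(2*x*y)) / 2) ≤ 1 := by
  set q : ℝ := (x^2 + y^2 - zc^2)/(2*x*y) with hqdef
  have hxy : 0 < 2*x*y := by positivity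
  have hq1 : -1 ≤ q := by
    rw [hqdef, le_div_iff₀ hxy]
    nlinarith
  have hq2 : q ≤ 1 := by
    rw [hqdef, div_le_iff₀ hxy]
    nlinarith
  set θ : ℝ := Real.arccos q with hθdef
  have hθ0 : 0 ≤ θ := Real.arccos_nonneg q
  have hθπ : θ ≤ π := Real.arccos_le_pi q
  have hcosθ : Real.cos θ = q := Real.cos_arccos hq1 hq2
  have hc2 : Real.cos (θ/2)^2 = (1 + q)/2 := by
    have := Real.cos_sq (θ/2)
    rw [show 2*(θ/2) = θ by ring] at this
    rw [this, hcosθ]; ring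
  have hs2 : Real.sin (θ/2)^2 = (1 - q)/2 := by
    have := Real.sin_sq (θ/2)
    rw [hc2] at this
    rw [this]; ring
  refine ⟨?_, ?_, ?_, ?_, ?_, ?_⟩
  · rw [hc2, hqdef]; field_simp; ring
  · rw [hs2, hqdef]; field_simp; ring
  · apply Real.cos_nonneg_of_mem_Icc
    constructor <;> [linarith [Real.pi_pos]; linarith]
  · apply Real.sin_nonneg_of_nonneg_of_le_pi <;> linarith
  · exact Real.cos_le_one _
  · exact Real.sin_le_one _

lemma sum_shift (t : ℕ → ℝ) (base F2 Z : ℕ) (hZ : base + F2 + 1 ≤ Z)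
    (h0 : ∀ z, z < base → t z = 0) (h1 : ∀ z, base + F2 < z → t z = 0) :
    ∑ z ∈ Finset.range Z, t z = ∑ i ∈ Finset.range (F2+1), t (base + i) := by
  have e1 : ∑ z ∈ Finset.range Z, t z = ∑ z ∈ Finset.range (base + (F2+1)), t z := by
    refine (Finset.sum_subset (Finset.range_subset_range.mpr (by omega)) ?_).symm
    intro z hz hnz
    exact h1 z (by simp only [Finset.mem_range] at hz hnz; omega)
  rw [e1, Finset.sum_range_add]
  rw [Finset.sum_eq_zero (fun z hz => h0 z (Finset.mem_range.mp hz)), zero_add]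

lemma den1_add (p q : ℚ) (hp : p.den = 1) (hq : q.den = 1) : (p+q).den = 1 := by
  obtain ⟨zp, rfl⟩ := (den1_iff p).mp hp
  obtain ⟨zq, rfl⟩ := (den1_iff q).mp hq
  rw [den1_iff]; exact ⟨zp + zq, by push_cast; ring⟩

lemma den1_sub (p q : ℚ) (hp : p.den = 1) (hq : q.den = 1) : (p-q).den = 1 := by
  obtain ⟨zp, rfl⟩ := (den1_iff p).mp hp
  obtain ⟨zq, rfl⟩ := (den1_iff q).mp hq
  rw [den1_iff]; exact ⟨zp - zq, by push_cast; ring⟩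

end Aux2

namespace Aux3
open Real Filter Topology Finset Aux Aux2

lemma sq_cancel (a b : ℝ) (ha : 0 ≤ a) (hb : 0 ≤ b) (h : a^2 = b^2) : a = b := by nlinarith

lemma sign_eq (N k : ℕ) (zP znm zfm zfn : ℤ) (hbase : (N:ℤ) = zP + znm) (hrel : zfm = znm + zfn) :
    ((-1:ℝ))^(zP+zfm) * ((-1:ℝ))^zfn * (-1:ℝ)^k = (-1:ℝ)^(N + k) := by
  have h1 : (-1:ℝ) ≠ 0 := by norm_num
  rw [← zpow_add₀ h1]
  have h2 : zP + zfm + zfn = (N:ℤ) + 2*zfn := by omega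
  rw [h2, zpow_add₀ h1, zpow_natCast, pow_add]
  have h3 : ((-1:ℝ))^(2*zfn) = 1 := by
    rw [zpow_mul]
    norm_num
  rw [h3]
  ring

lemma degenerate (f m n a b c : ℚ) (hf : isHalfInt f) (hn : isHalfInt n)
    (hfn : (f+n).den ≠ 1) (hP : (c+b+a).den = 1) :
    sixJ c b a f (a+n) (b+m) = 0 ∧ msign (f - n) = 0 := by
  constructor
  · rw [sixJ, Finset.sum_eq_zero, mul_zero]
    intro z hz
    rw [if_neg]
    rintro ⟨-, -, -, -, -, h6, -⟩
    have he : f+n = (c+b+f+(a+n)-(z:ℚ)) - (c+b+a) + (z:ℚ) := by ring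
    refine hfn ?_
    rw [he]
    exact den1_add _ _ (den1_sub _ _ h6.2 hP) (Rat.den_natCast z)
  · obtain ⟨z2f, hz2f⟩ := (den1_iff _).mp hf
    obtain ⟨z2n, hz2n⟩ := (den1_iff _).mp hn
    rcases Int.even_or_odd (z2f - z2n) with ⟨t, ht⟩ | ⟨t, ht⟩
    · exfalso
      refine hfn ((den1_iff _).mpr ⟨z2n + t, ?_⟩)
      have htq : (z2f:ℚ) - z2n = (t:ℚ) + t := by exact_mod_cast ht
      have key : (2:ℚ) * (f + n) = 2 * ((z2n + t : ℤ) : ℚ) := by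
        push_cast
        linarith [hz2f, hz2n]
      linarith [mul_left_cancel₀ (show (2:ℚ) ≠ 0 by norm_num) key]
    · refine msign_half t (f - n) ?_
      have h1 : ((z2f:ℚ)) - z2n = 2*(t:ℚ)+1 := by exact_mod_cast ht
      linarith [hz2f, hz2n]
end Aux3

namespace Aux4
open Real Filter Topology Finset Aux Aux2 Aux3

set_option maxHeartbeats 2000000 in
/-- Core analytic lemma: the factorial-ratio expression `R` approaches `T²`. -/
lemma core (l : ℕ → ℝ) (hl : Tendsto l atTop atTop)
    (k dnm dfn dfm F2 : ℕ) (hF2 : F2 = k + dnm + dfn + dfm)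
    (S1 S2 S3 S4' Sa Sb : ℝ)
    (hS1 : 0 < S1) (hS2 : 0 < S2) (hS3 : 0 < S3) (hS4 : 0 < S4') (hSa : 0 < Sa) (hSb : 0 < Sb)
    (NP1 NP2 NA NB NG Na Nb : ℕ → ℕ) (W1 W2 W3 W4 x y u v ωa ωb : ℕ → ℝ)
    (e1 e2 e3 e4 e5 e6 e7 d1 d2 d3 d4 dx dy dω1 dω2 : ℝ)
    (hNP1 : ∀ᶠ j in atTop, (NP1 j : ℝ) = S1 * l j + e1)
    (hNP2 : ∀ᶠ j in atTop, (NP2 j : ℝ) = S1 * l j + e2)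
    (hNA : ∀ᶠ j in atTop, (NA j : ℝ) = S2 * l j + e3)
    (hNB : ∀ᶠ j in atTop, (NB j : ℝ) = S3 * l j + e4)
    (hNG : ∀ᶠ j in atTop, (NG j : ℝ) = S4' * l j + e5)
    (hNa : ∀ᶠ j in atTop, (Na j : ℝ) = Sa * l j + e6)
    (hNb : ∀ᶠ j in atTop, (Nb j : ℝ) = Sb * l j + e7)
    (hW1 : ∀ᶠ j in atTop, W1 j = S1 * l j + d1)
    (hW2 : ∀ᶠ j in atTop, W2 j = S2 * l j + d2)
    (hW3 : ∀ᶠ j in atTop, W3 j = S3 * l j + d3)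
    (hW4 : ∀ᶠ j in atTop, W4 j = S4' * l j + d4)
    (hx : ∀ᶠ j in atTop, 2 * x j = Sa * l j + dx)
    (hy : ∀ᶠ j in atTop, 2 * y j = Sb * l j + dy)
    (hωa : ∀ᶠ j in atTop, ωa j = Sa * l j + dω1)
    (hωb : ∀ᶠ j in atTop, ωb j = Sb * l j + dω2)
    (hu2 : ∀ᶠ j in atTop, (u j)^2 = W1 j * W2 j / (4*(x j * y j)))
    (hv2 : ∀ᶠ j in atTop, (v j)^2 = W3 j * W4 j / (4*(x j * y j)))
    (hu0 : ∀ᶠ j in atTop, 0 ≤ u j) (hv0 : ∀ᶠ j in atTop, 0 ≤ v j)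
    (hu1 : ∀ᶠ j in atTop, u j ≤ 1) (hv1 : ∀ᶠ j in atTop, v j ≤ 1) :
    Tendsto (fun j =>
      |Real.sqrt (
          ((Nat.factorial (NP1 j + dnm) : ℝ)/(Nat.factorial (NP1 j))) *
          ((Nat.factorial (NP2 j + k) : ℝ)/(Nat.factorial (NP2 j))) *
          ((Nat.factorial (NA j + k) : ℝ)/(Nat.factorial (NA j))) *
          ((Nat.factorial (NA j + dnm) : ℝ)/(Nat.factorial (NA j))) *
          ((Nat.factorial (NB j + dfm) : ℝ)/(Nat.factorial (NB j))) *
          ((Nat.factorial (NB j + dfn) : ℝ)/(Nat.factorial (NB j))) *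
          ((Nat.factorial (NG j + dfn) : ℝ)/(Nat.factorial (NG j))) *
          ((Nat.factorial (NG j + dfm) : ℝ)/(Nat.factorial (NG j))) *
          (ωa j / ((Nat.factorial (Na j + (F2+1)) : ℝ)/(Nat.factorial (Na j)))) *
          (ωb j / ((Nat.factorial (Nb j + (F2+1)) : ℝ)/(Nat.factorial (Nb j)))))
        - (u j)^(k + dnm) * (v j)^(dfn + dfm)|) atTop (nhds 0) := by

  have evpos : ∀ (S c : ℝ), 0 < S → ∀ᶠ j in atTop, 0 < S * l j + c := by
    intro S c hS
    filter_upwards [hl.eventually_ge_atTop ((1-c)/S)] with j hj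
    rw [div_le_iff₀ hS] at hj
    linarith
  set asc : ℕ → ℕ → ℝ := fun N d => (Nat.factorial (N+d) : ℝ)/(Nat.factorial N) with hasc
  set G : ℕ → ℝ := fun j =>
    asc (NP1 j) dnm / (W1 j)^dnm * (asc (NP2 j) k / (W1 j)^k) *
    (asc (NA j) k / (W2 j)^k) * (asc (NA j) dnm / (W2 j)^dnm) *
    (asc (NB j) dfm / (W3 j)^dfm) * (asc (NB j) dfn / (W3 j)^dfn) *
    (asc (NG j) dfn / (W4 j)^dfn) * (asc (NG j) dfm / (W4 j)^dfm) *
    ((2*x j)^(F2+1) / asc (Na j) (F2+1)) * ((2*y j)^(F2+1) / asc (Nb j) (F2+1)) *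
    (ωa j / (2*x j)) * (ωb j / (2*y j)) with hG
  have p1 := asc_div_pow_tendsto dnm S1 e1 d1 hS1 l hl NP1 W1 hNP1 hW1
  have p2 := asc_div_pow_tendsto k S1 e2 d1 hS1 l hl NP2 W1 hNP2 hW1
  have p3 := asc_div_pow_tendsto k S2 e3 d2 hS2 l hl NA W2 hNA hW2
  have p4 := asc_div_pow_tendsto dnm S2 e3 d2 hS2 l hl NA W2 hNA hW2
  have p5 := asc_div_pow_tendsto dfm S3 e4 d3 hS3 l hl NB W3 hNB hW3
  have p6 := asc_div_pow_tendsto dfn S3 e4 d3 hS3 l hl NB W3 hNB hW3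
  have p7 := asc_div_pow_tendsto dfn S4' e5 d4 hS4 l hl NG W4 hNG hW4
  have p8 := asc_div_pow_tendsto dfm S4' e5 d4 hS4 l hl NG W4 hNG hW4
  have p9' := asc_div_pow_tendsto (F2+1) Sa e6 dx hSa l hl Na (fun j => 2*x j) hNa hx
  have p9 : Tendsto (fun j => (2*x j)^(F2+1) / asc (Na j) (F2+1)) atTop (nhds 1) := by
    have h := p9'.inv₀ one_ne_zero
    rw [inv_one] at h
    refine h.congr (fun j => ?_)
    rw [inv_div]
  have p10' := asc_div_pow_tendsto (F2+1) Sb e7 dy hSb l hl Nb (fun j => 2*y j) hNb hy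
  have p10 : Tendsto (fun j => (2*y j)^(F2+1) / asc (Nb j) (F2+1)) atTop (nhds 1) := by
    have h := p10'.inv₀ one_ne_zero
    rw [inv_one] at h
    refine h.congr (fun j => ?_)
    rw [inv_div]
  have p11 := lin_ratio_tendsto Sa dω1 dx hSa l hl ωa (fun j => 2*x j) hωa hx
  have p12 := lin_ratio_tendsto Sb dω2 dy hSb l hl ωb (fun j => 2*y j) hωb hy
  have hGlim : Tendsto G atTop (nhds 1) := by
    have := (((((((((((p1.mul p2).mul p3).mul p4).mul p5).mul p6).mul p7).mul p8).mul
      p9).mul p10).mul p11).mul p12)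
    simpa using this
  refine key_sqrt _ _ G ?_ ?_ ?_ hGlim
  · filter_upwards [hu0, hv0] with j h0 h1
    positivity
  · filter_upwards [hu0, hv0, hu1, hv1] with j h0 h1 h2 h3
    exact mul_le_one₀ (pow_le_one₀ h0 h2) (by positivity) (pow_le_one₀ h1 h3)
  · filter_upwards [hu2, hv2, hW1.and (evpos S1 d1 hS1), hW2.and (evpos S2 d2 hS2),
      hW3.and (evpos S3 d3 hS3), hW4.and (evpos S4' d4 hS4),
      hx.and (evpos Sa dx hSa), hy.and (evpos Sb dy hSb)] with j hju hjv hj1 hj2 hj3 hj4 hjx hjy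
    have hW1p : 0 < W1 j := by rw [hj1.1]; exact hj1.2
    have hW2p : 0 < W2 j := by rw [hj2.1]; exact hj2.2
    have hW3p : 0 < W3 j := by rw [hj3.1]; exact hj3.2
    have hW4p : 0 < W4 j := by rw [hj4.1]; exact hj4.2
    have hxp : 0 < x j := by nlinarith [hjx.1, hjx.2]
    have hyp : 0 < y j := by nlinarith [hjy.1, hjy.2]
    have hT2 : ((u j)^(k + dnm) * (v j)^(dfn + dfm))^2
        = (W1 j * W2 j / (4*(x j * y j)))^(k+dnm) * (W3 j * W4 j / (4*(x j * y j)))^(dfn+dfm) := by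
      rw [mul_pow, ← pow_right_comm (u j), ← pow_right_comm (v j), hju, hjv]
    rw [hT2, hG]
    subst hF2
    have z1 : (Nat.factorial (NP1 j) : ℝ) ≠ 0 := by positivity
    have z2 : (Nat.factorial (NP2 j) : ℝ) ≠ 0 := by positivity
    have z3 : (Nat.factorial (NA j) : ℝ) ≠ 0 := by positivity
    have z4 : (Nat.factorial (NB j) : ℝ) ≠ 0 := by positivity
    have z5 : (Nat.factorial (NG j) : ℝ) ≠ 0 := by positivity
    have z6 : (Nat.factorial (Na j) : ℝ) ≠ 0 := by positivity
    have z7 : (Nat.factorial (Nb j) : ℝ) ≠ 0 := by positivity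
    have z8 : (Nat.factorial (Na j + (k+dnm+dfn+dfm+1)) : ℝ) ≠ 0 := by positivity
    have z9 : (Nat.factorial (Nb j + (k+dnm+dfn+dfm+1)) : ℝ) ≠ 0 := by positivity
    have zW1 : W1 j ≠ 0 := ne_of_gt hW1p
    have zW2 : W2 j ≠ 0 := ne_of_gt hW2p
    have zW3 : W3 j ≠ 0 := ne_of_gt hW3p
    have zW4 : W4 j ≠ 0 := ne_of_gt hW4p
    have zx : x j ≠ 0 := ne_of_gt hxp
    have zy : y j ≠ 0 := ne_of_gt hyp
    simp only [hasc]
    simp only [mul_pow, div_pow, pow_add, pow_one]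
    field_simp
    rw [show (4:ℝ) = 2^2 by norm_num]
    simp only [← pow_mul]
    ring

end Aux4

namespace Aux5
open Real Filter Topology Finset Aux Aux2 Aux3 Aux4

lemma le_num_toNat (q : ℚ) (h : 0 ≤ q) : q ≤ (q.num.toNat : ℚ) := by
  have h1 : q ≤ (q.num : ℚ) := by
    conv_lhs => rw [← Rat.num_div_den q]
    apply div_le_self
    · exact_mod_cast Rat.num_nonneg.mpr h
    · exact_mod_cast q.pos
  have h2 : ((q.num.toNat : ℤ) : ℚ) = (q.num : ℚ) := by
    exact_mod_cast congrArg (fun z : ℤ => (z:ℚ)) (Int.toNat_of_nonneg (Rat.num_nonneg.mpr h))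
  push_cast at h2
  linarith

lemma mul_sum_shift (S : ℝ) (w : ℕ → ℝ) (base F2 Z : ℕ) (hZ : base + F2 + 1 ≤ Z)
    (h0 : ∀ z, z < base → w z = 0) (h1 : ∀ z, base + F2 < z → w z = 0) :
    S * ∑ z ∈ Finset.range Z, w z = ∑ i ∈ Finset.range (F2+1), S * w (base + i) := by
  rw [sum_shift w base F2 Z hZ h0 h1, Finset.mul_sum]

lemma sign_split (s A B C D E : ℝ) (h : A * (B / C) = D * E) :
    A * (s * B / C) = s * D * E := by
  have : A * (s * B / C) = s * (A * (B / C)) := by ring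
  rw [this, h]; ring

set_option maxHeartbeats 4000000 in
lemma main_tendsto (f m n : ℚ) (hf : isHalfInt f) (hm : isHalfInt m) (hn : isHalfInt n)
    (hmf : |m| ≤ f) (hnf : |n| ≤ f) (hfn : (f+n).den = 1)
    (a₀ b₀ c₀ : ℝ) (ha₀ : 0 < a₀) (hb₀ : 0 < b₀) (hc₀ : 0 < c₀)
    (h1 : c₀ < a₀ + b₀) (h2 : a₀ < b₀ + c₀) (h3 : b₀ < a₀ + c₀)
    (l : ℕ → ℝ) (hl : Tendsto l atTop atTop)
    (a b c : ℕ → ℚ)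
    (hA : ∀ j, (a j : ℝ) = l j * a₀) (hB : ∀ j, (b j : ℝ) = l j * b₀)
    (hC : ∀ j, (c j : ℝ) = l j * c₀)
    (hAdm : ∀ j, sixJAdm (c j) (b j) (a j) f (a j + n) (b j + m)) :
    Tendsto (fun j =>
      |Real.sqrt (((2*(a j) + n + f + 1 : ℚ) : ℝ) * ((2*(b j) + m + f + 1 : ℚ) : ℝ)) *
          sixJ (c j) (b j) (a j) f (a j + n) (b j + m)
        - msign (a j + b j + c j + f + m) *
          dmat f n m (Real.arccos (
            ((((a j + n : ℚ) : ℝ) + 1/2)^2 + (((b j + m : ℚ) : ℝ) + 1/2)^2 - ((c j : ℝ) + 1/2)^2)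
            / (2 * (((a j + n : ℚ) : ℝ) + 1/2) * (((b j + m : ℚ) : ℝ) + 1/2))))|)
      atTop (nhds 0) := by
  -- ===== fixed small naturals =====
  have hnabs := abs_le.mp hnf
  have hmabs := abs_le.mp hmf
  have hfnden : (f - n).den = 1 := by
    have e : f - n = (f+n) - 2*n := by ring
    rw [e]; exact den1_sub _ _ hfn hn
  have hnm : (n + m).den = 1 := by
    have d1 : (c 0 + (a 0 + n) + (b 0 + m)).den = 1 := (hAdm 0).2.2.1.2.2.2.2.2.2
    have d2 : (c 0 + b 0 + a 0).den = 1 := (hAdm 0).1.2.2.2.2.2.2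
    have e : n + m = (c 0 + (a 0 + n) + (b 0 + m)) - (c 0 + b 0 + a 0) := by ring
    rw [e]; exact den1_sub _ _ d1 d2
  have hfmden : (f - m).den = 1 := by
    have e : f - m = (f+n) - (n+m) := by ring
    rw [e]; exact den1_sub _ _ hfn hnm
  have hfmden' : (f + m).den = 1 := by
    have e : f + m = (f - m) + 2*m := by ring
    rw [e]; exact den1_add _ _ hfmden hm
  obtain ⟨Ffn', hFfn'⟩ := exists_nat_eq (f+n) hfn (by linarith)
  obtain ⟨Ffn, hFfn⟩ := exists_nat_eq (f-n) hfnden (by linarith)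
  obtain ⟨Ffm', hFfm'⟩ := exists_nat_eq (f+m) hfmden' (by linarith)
  obtain ⟨Ffm, hFfm⟩ := exists_nat_eq (f-m) hfmden (by linarith)
  set F2 : ℕ := Ffn + Ffn' with hF2def
  have hF2q : (F2 : ℚ) = 2*f := by
    push_cast [hF2def]
    rw [hFfn, hFfn']; ring
  have hF2toNat : (2*f).num.toNat = F2 := num_toNat_eq F2 _ hF2q
  -- ===== per-j admissibility facts =====
  have t1 := fun j => (hAdm j).1
  have t2 := fun j => (hAdm j).2.1
  have t3 := fun j => (hAdm j).2.2.1
  have t4 := fun j => (hAdm j).2.2.2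
  have hPden : ∀ j, (a j + b j + c j).den = 1 := by
    intro j
    have := (t1 j).2.2.2.2.2.2
    rwa [show c j + b j + a j = a j + b j + c j from by ring] at this
  have h2a : ∀ j, (2*(a j)).den = 1 := by
    intro j
    have := (t2 j).2.2.2.2.2.2
    have e : 2*(a j) = (a j + f + (a j + n)) - (f + n) := by ring
    rw [e]; exact den1_sub _ _ this hfn
  have h2b : ∀ j, (2*(b j)).den = 1 := by
    intro j
    have := (t4 j).2.2.2.2.2.2
    have e : 2*(b j) = (b j + f + (b j + m)) - (f + m) := by ring
    rw [e]; exact den1_sub _ _ this hfmden'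
  have h2c : ∀ j, (2*(c j)).den = 1 := by
    intro j
    have e : 2*(c j) = ((a j + b j + c j) + (a j + b j + c j)) - (2*(a j)) - (2*(b j)) := by ring
    rw [e]
    exact den1_sub _ _ (den1_sub _ _ (den1_add _ _ (hPden j) (hPden j)) (h2a j)) (h2b j)
  have hαden : ∀ j (k : ℕ), (a j + b j - c j - (k:ℚ)).den = 1 := by
    intro j k
    have e : a j + b j - c j - (k:ℚ) = (a j + b j + c j) - 2*(c j) - (k:ℚ) := by ring
    rw [e]
    exact den1_sub _ _ (den1_sub _ _ (hPden j) (h2c j)) (Rat.den_natCast k)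
  have hβden : ∀ j (k : ℕ), (b j + c j - a j - (f - m - (k:ℚ))).den = 1 := by
    intro j k
    have e : b j + c j - a j - (f - m - (k:ℚ))
        = (a j + b j + c j) - 2*(a j) - (f-m) + (k:ℚ) := by ring
    rw [e]
    exact den1_add _ _ (den1_sub _ _ (den1_sub _ _ (hPden j) (h2a j)) hfmden) (Rat.den_natCast k)
  have hγden : ∀ j (k : ℕ), (a j + c j - b j - (f - n - (k:ℚ))).den = 1 := by
    intro j k
    have e : a j + c j - b j - (f - n - (k:ℚ))
        = (a j + b j + c j) - 2*(b j) - (f-n) + (k:ℚ) := by ring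
    rw [e]
    exact den1_add _ _ (den1_sub _ _ (den1_sub _ _ (hPden j) (h2b j)) hfnden) (Rat.den_natCast k)
  have hbaseden : ∀ j, (a j + b j + c j + n + m).den = 1 := by
    intro j
    have e : a j + b j + c j + n + m = (a j + b j + c j) + (n+m) := by ring
    rw [e]; exact den1_add _ _ (hPden j) hnm
  have hNaden : ∀ j, (2*(a j) + n - f).den = 1 := by
    intro j
    have e : 2*(a j) + n - f = 2*(a j) - (f - n) := by ring
    rw [e]; exact den1_sub _ _ (h2a j) hfnden
  have hNbden : ∀ j, (2*(b j) + m - f).den = 1 := by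
    intro j
    have e : 2*(b j) + m - f = 2*(b j) - (f - m) := by ring
    rw [e]; exact den1_sub _ _ (h2b j) hfmden
  -- ===== named sequences =====
  set x : ℕ → ℝ := fun j => (((a j + n : ℚ) : ℝ) + 1/2) with hxdef
  set y : ℕ → ℝ := fun j => (((b j + m : ℚ) : ℝ) + 1/2) with hydef
  set zc : ℕ → ℝ := fun j => ((c j : ℝ) + 1/2) with hzcdef
  set θf : ℕ → ℝ := fun j => Real.arccos ((x j^2 + y j^2 - zc j^2) / (2 * x j * y j)) with hθdef
  set uf : ℕ → ℝ := fun j => Real.cos (θf j / 2) with hudef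
  set vf : ℕ → ℝ := fun j => Real.sin (θf j / 2) with hvdef
  set W1 : ℕ → ℝ := fun j => x j + y j + zc j with hW1def
  set W2 : ℕ → ℝ := fun j => x j + y j - zc j with hW2def
  set W3 : ℕ → ℝ := fun j => zc j - x j + y j with hW3def
  set W4 : ℕ → ℝ := fun j => zc j + x j - y j with hW4def
  set ωa : ℕ → ℝ := fun j => ((2*(a j) + n + f + 1 : ℚ) : ℝ) with hωadef
  set ωb : ℕ → ℝ := fun j => ((2*(b j) + m + f + 1 : ℚ) : ℝ) with hωbdef
  set basef : ℕ → ℕ := fun j => (a j + b j + c j + n + m).num.toNat with hbasedef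
  set NP1 : ℕ → ℕ := fun j => (a j + b j + c j).num.toNat + 1 with hNP1def
  set NP2 : ℕ → ℕ := fun j => basef j + 1 with hNP2def
  set NAf : ℕ → ℕ → ℕ := fun k j => (a j + b j - c j - (k:ℚ)).num.toNat with hNAdef
  set NBf : ℕ → ℕ → ℕ := fun k j => (b j + c j - a j - (f - m - (k:ℚ))).num.toNat with hNBdef
  set NGf : ℕ → ℕ → ℕ := fun k j => (a j + c j - b j - (f - n - (k:ℚ))).num.toNat with hNGdef
  set Naf : ℕ → ℕ := fun j => (2*(a j) + n - f).num.toNat with hNadef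
  set Nbf : ℕ → ℕ := fun j => (2*(b j) + m - f).num.toNat with hNbdef
  set DNM : ℕ → ℕ := fun k => (n+m+(k:ℚ)).num.toNat with hDNMdef
  set DFN : ℕ → ℕ := fun k => (f-n-(k:ℚ)).num.toNat with hDFNdef
  set DFM : ℕ → ℕ := fun k => (f-m-(k:ℚ)).num.toNat with hDFMdef
  set S4v : ℝ := Real.sqrt (hfact (f+n) * hfact (f-n) * hfact (f+m) * hfact (f-m)) with hS4vdef
  set CC : ℕ → ℝ := fun k => S4v /
    ((Nat.factorial k : ℝ) * hfact (f-n-(k:ℚ)) * hfact (f-m-(k:ℚ)) * hfact (n+m+(k:ℚ))) with hCCdef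
  set Tf : ℕ → ℕ → ℝ := fun k j =>
    uf j ^ ((2*(k:ℚ)+n+m).num.toNat) * vf j ^ ((2*f-2*(k:ℚ)-n-m).num.toNat) with hTdef
  set RR : ℕ → ℕ → ℝ := fun k j =>
    ((Nat.factorial (NP1 j + DNM k) : ℝ)/(Nat.factorial (NP1 j))) *
    ((Nat.factorial (NP2 j + k) : ℝ)/(Nat.factorial (NP2 j))) *
    ((Nat.factorial (NAf k j + k) : ℝ)/(Nat.factorial (NAf k j))) *
    ((Nat.factorial (NAf k j + DNM k) : ℝ)/(Nat.factorial (NAf k j))) *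
    ((Nat.factorial (NBf k j + DFM k) : ℝ)/(Nat.factorial (NBf k j))) *
    ((Nat.factorial (NBf k j + DFN k) : ℝ)/(Nat.factorial (NBf k j))) *
    ((Nat.factorial (NGf k j + DFN k) : ℝ)/(Nat.factorial (NGf k j))) *
    ((Nat.factorial (NGf k j + DFM k) : ℝ)/(Nat.factorial (NGf k j))) *
    (ωa j / ((Nat.factorial (Naf j + (F2+1)) : ℝ)/(Nat.factorial (Naf j)))) *
    (ωb j / ((Nat.factorial (Nbf j + (F2+1)) : ℝ)/(Nat.factorial (Nbf j)))) with hRRdef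
  set Cond : ℕ → Prop := fun k =>
    isNNInt (f-n-(k:ℚ)) ∧ isNNInt (f-m-(k:ℚ)) ∧ isNNInt (n+m+(k:ℚ)) with hConddef
  have hConddec : ∀ k, Decidable (Cond k) := fun k => by rw [hConddef]; infer_instance
  set XX : ℕ → ℕ → ℝ := fun k j =>
    @ite _ (Cond k) (hConddec k) ((-1:ℝ)^(basef j + k) * CC k * Real.sqrt (RR k j)) 0 with hXXdef
  set YY : ℕ → ℕ → ℝ := fun k j =>
    @ite _ (Cond k) (hConddec k) ((-1:ℝ)^(basef j + k) * CC k * Tf k j) 0 with hYYdef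
  -- ===== positivity facts (pointwise) =====
  have hxpos : ∀ j, (0:ℝ) < x j := by
    intro j
    have h := (t3 j).2.1
    have : (0:ℝ) ≤ ((a j + n : ℚ):ℝ) := by exact_mod_cast h
    rw [hxdef]; dsimp only; linarith
  have hypos : ∀ j, (0:ℝ) < y j := by
    intro j
    have h := (t3 j).2.2.1
    have : (0:ℝ) ≤ ((b j + m : ℚ):ℝ) := by exact_mod_cast h
    rw [hydef]; dsimp only; linarith
  have hzcpos : ∀ j, (0:ℝ) < zc j := by
    intro j
    have h := (t1 j).1
    have : (0:ℝ) ≤ ((c j : ℚ):ℝ) := by exact_mod_cast h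
    rw [hzcdef]; dsimp only; linarith
  have hW1pos : ∀ j, (0:ℝ) < W1 j := fun j => by
    have := hxpos j; have := hypos j; have := hzcpos j
    rw [hW1def]; dsimp only; linarith
  have hW2pos : ∀ j, (0:ℝ) < W2 j := by
    intro j
    have h := (t3 j).2.2.2.2.1
    have hr : ((c j : ℚ):ℝ) ≤ ((a j + n : ℚ):ℝ) + ((b j + m : ℚ):ℝ) := by
      have : (c j : ℚ) ≤ (a j + n) + (b j + m) := h
      exact_mod_cast this
    rw [hW2def, hxdef, hydef, hzcdef]; dsimp only; push_cast at hr ⊢; linarith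
  have hW3pos : ∀ j, (0:ℝ) < W3 j := by
    intro j
    have h := (t3 j).2.2.2.2.2.1
    have hr : ((a j + n : ℚ):ℝ) ≤ ((b j + m : ℚ):ℝ) + ((c j : ℚ):ℝ) := by
      have : (a j + n : ℚ) ≤ (b j + m) + c j := by linarith [h]
      exact_mod_cast this
    rw [hW3def, hxdef, hydef, hzcdef]; dsimp only; push_cast at hr ⊢; linarith
  have hW4pos : ∀ j, (0:ℝ) < W4 j := by
    intro j
    have h := (t3 j).2.2.2.1
    have hr : ((b j + m : ℚ):ℝ) ≤ ((c j : ℚ):ℝ) + ((a j + n : ℚ):ℝ) := by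
      have : (b j + m : ℚ) ≤ c j + (a j + n) := h
      exact_mod_cast this
    rw [hW4def, hxdef, hydef, hzcdef]; dsimp only; push_cast at hr ⊢; linarith
  have huv := fun j => arccos_sq (x j) (y j) (zc j) (hxpos j) (hypos j)
    (hW1pos j) (hW2pos j) (hW3pos j) (hW4pos j)
  have hu2 : ∀ j, (uf j)^2 = W1 j * W2 j / (4*(x j * y j)) := by
    intro j
    have h := (huv j).1
    rw [hudef, hθdef, hW1def, hW2def]
    dsimp only
    rw [show 2 * x j * y j = 2*(x j)*(y j) from by ring] at h ⊢
    convert h using 3 <;> ring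
  have hv2 : ∀ j, (vf j)^2 = W3 j * W4 j / (4*(x j * y j)) := by
    intro j
    have h := (huv j).2.1
    rw [hvdef, hθdef, hW3def, hW4def]
    dsimp only
    convert h using 3 <;> ring
  have hu0 : ∀ j, 0 ≤ uf j := fun j => (huv j).2.2.1
  have hv0 : ∀ j, 0 ≤ vf j := fun j => (huv j).2.2.2.1
  have hu1 : ∀ j, uf j ≤ 1 := fun j => (huv j).2.2.2.2.1
  have hv1 : ∀ j, vf j ≤ 1 := fun j => (huv j).2.2.2.2.2
  -- ===== eventual lower bound machinery =====
  have hev : ∀ (q : ℕ → ℚ) (S e : ℝ), 0 < S → (∀ j, (q j:ℝ) = l j * S + e) →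
      ∀ M : ℚ, ∀ᶠ j in atTop, M ≤ q j := by
    intro q S e hS hq M
    filter_upwards [hl.eventually_ge_atTop (((M:ℝ) - e)/S)] with j hj
    have h2 : (M:ℝ) - e ≤ l j * S := by
      rw [div_le_iff₀ hS] at hj; linarith [hj]
    have : (M:ℝ) ≤ (q j : ℝ) := by rw [hq j]; linarith
    exact_mod_cast this
  have hαlin : ∀ j, ((a j + b j - c j : ℚ):ℝ) = l j * (a₀ + b₀ - c₀) + 0 := by
    intro j; push_cast [hA j, hB j, hC j]; ring
  have hβlin : ∀ j, ((b j + c j - a j : ℚ):ℝ) = l j * (b₀ + c₀ - a₀) + 0 := by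
    intro j; push_cast [hA j, hB j, hC j]; ring
  have hγlin : ∀ j, ((a j + c j - b j : ℚ):ℝ) = l j * (a₀ + c₀ - b₀) + 0 := by
    intro j; push_cast [hA j, hB j, hC j]; ring
  have hPlin : ∀ j, ((a j + b j + c j : ℚ):ℝ) = l j * (a₀ + b₀ + c₀) + 0 := by
    intro j; push_cast [hA j, hB j, hC j]; ring
  have h2alin : ∀ j, ((2*(a j) : ℚ):ℝ) = l j * (2*a₀) + 0 := by
    intro j; push_cast [hA j]; ring
  have h2blin : ∀ j, ((2*(b j) : ℚ):ℝ) = l j * (2*b₀) + 0 := by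
    intro j; push_cast [hB j]; ring
  -- ===== toNat spec facts =====
  have hPnonneg : ∀ j, (0:ℚ) ≤ a j + b j + c j := by
    intro j
    have h1 := (t1 j).1; have h2 := (t1 j).2.1; have h3 := (t1 j).2.2.1
    linarith
  have hPtoNat : ∀ j, (((a j + b j + c j).num.toNat : ℕ):ℚ) = a j + b j + c j :=
    fun j => toNat_spec _ (hPden j) (hPnonneg j)
  have hbaselin : ∀ j, ((a j + b j + c j + n + m : ℚ):ℝ)
      = l j * (a₀ + b₀ + c₀) + (((n:ℚ):ℝ) + ((m:ℚ):ℝ)) := by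
    intro j; push_cast [hA j, hB j, hC j]; ring
  have hbspec : ∀ᶠ j in atTop, ((basef j : ℕ):ℚ) = a j + b j + c j + n + m := by
    filter_upwards [hev (fun j => a j + b j + c j + n + m) (a₀+b₀+c₀) (((n:ℚ):ℝ) + ((m:ℚ):ℝ))
      (by linarith) hbaselin 0] with j hj
    exact toNat_spec _ (hbaseden j) hj
  have hNP1spec : ∀ j, ((NP1 j : ℕ):ℝ) = (a₀+b₀+c₀) * l j + 1 := by
    intro j
    rw [hNP1def]
    push_cast
    have : (((a j + b j + c j).num.toNat : ℕ):ℝ) = ((a j + b j + c j : ℚ):ℝ) := by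
      exact_mod_cast congrArg (fun q : ℚ => (q:ℝ)) (hPtoNat j)
    rw [this, hPlin j]; ring
  have hCCpos : ∀ k, 0 < CC k := by
    intro k
    rw [hCCdef]
    have h1 := hfact_pos (f-n-(k:ℚ)); have h2 := hfact_pos (f-m-(k:ℚ))
    have h3 := hfact_pos (n+m+(k:ℚ))
    have h4 : (0:ℝ) < S4v := by
      rw [hS4vdef]
      have := hfact_pos (f+n); have := hfact_pos (f-n)
      have := hfact_pos (f+m); have := hfact_pos (f-m)
      apply Real.sqrt_pos.mpr; positivity
    have h5 : (0:ℝ) < (Nat.factorial k : ℝ) := by positivity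
    positivity
  -- ===== per-k limit =====
  have hterm : ∀ k : ℕ, Tendsto (fun j => |XX k j - YY k j|) atTop (nhds 0) := by
    intro k
    by_cases hc : Cond k
    · -- admissible k
      rw [hConddef] at hc
      have hDNMk : ((DNM k : ℕ):ℚ) = n+m+(k:ℚ) := toNat_spec _ hc.2.2.2 hc.2.2.1
      have hDFNk : ((DFN k : ℕ):ℚ) = f-n-(k:ℚ) := toNat_spec _ hc.1.2 hc.1.1
      have hDFMk : ((DFM k : ℕ):ℚ) = f-m-(k:ℚ) := toNat_spec _ hc.2.1.2 hc.2.1.1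
      have hF2sum : F2 = k + DNM k + DFN k + DFM k := by
        have hq : ((F2:ℕ):ℚ) = ((k + DNM k + DFN k + DFM k : ℕ):ℚ) := by
          push_cast [hF2q]
          push_cast at hDNMk hDFNk hDFMk
          linarith
        exact_mod_cast hq
      have hE1 : (2*(k:ℚ)+n+m).num.toNat = k + DNM k := by
        apply num_toNat_eq
        push_cast
        push_cast at hDNMk
        linarith
      have hE2 : (2*f-2*(k:ℚ)-n-m).num.toNat = DFN k + DFM k := by
        apply num_toNat_eq
        push_cast
        push_cast at hDFNk hDFMk
        linarith
      -- eventual cast specs for the large naturals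
      have hNAev : ∀ᶠ j in atTop, ((NAf k j : ℕ):ℝ) = (a₀+b₀-c₀) * l j + (-(k:ℝ)) := by
        filter_upwards [hev (fun j => a j + b j - c j - (k:ℚ)) (a₀+b₀-c₀) (-(k:ℝ))
          (by linarith) (fun j => by push_cast [hA j, hB j, hC j]; ring) 0] with j hj
        have h := toNat_spec _ (hαden j k) hj
        rw [hNAdef]
        have : (((a j + b j - c j - (k:ℚ)).num.toNat : ℕ):ℝ) = ((a j + b j - c j - (k:ℚ) : ℚ):ℝ) := by
          exact_mod_cast congrArg (fun q : ℚ => (q:ℝ)) h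
        dsimp only
        rw [this]
        push_cast [hA j, hB j, hC j]
        ring
      have hNBev : ∀ᶠ j in atTop, ((NBf k j : ℕ):ℝ)
          = (b₀+c₀-a₀) * l j + (-(((f - m - (k:ℚ) : ℚ)):ℝ)) := by
        filter_upwards [hev (fun j => b j + c j - a j - (f - m - (k:ℚ))) (b₀+c₀-a₀)
          (-(((f - m - (k:ℚ) : ℚ)):ℝ))
          (by linarith) (fun j => by push_cast [hA j, hB j, hC j]; ring) 0] with j hj
        have h := toNat_spec _ (hβden j k) hj
        rw [hNBdef]
        have : (((b j + c j - a j - (f - m - (k:ℚ))).num.toNat : ℕ):ℝ)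
            = ((b j + c j - a j - (f - m - (k:ℚ)) : ℚ):ℝ) := by
          exact_mod_cast congrArg (fun q : ℚ => (q:ℝ)) h
        dsimp only
        rw [this]
        push_cast [hA j, hB j, hC j]
        ring
      have hNGev : ∀ᶠ j in atTop, ((NGf k j : ℕ):ℝ)
          = (a₀+c₀-b₀) * l j + (-(((f - n - (k:ℚ) : ℚ)):ℝ)) := by
        filter_upwards [hev (fun j => a j + c j - b j - (f - n - (k:ℚ))) (a₀+c₀-b₀)
          (-(((f - n - (k:ℚ) : ℚ)):ℝ))
          (by linarith) (fun j => by push_cast [hA j, hB j, hC j]; ring) 0] with j hj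
        have h := toNat_spec _ (hγden j k) hj
        rw [hNGdef]
        have : (((a j + c j - b j - (f - n - (k:ℚ))).num.toNat : ℕ):ℝ)
            = ((a j + c j - b j - (f - n - (k:ℚ)) : ℚ):ℝ) := by
          exact_mod_cast congrArg (fun q : ℚ => (q:ℝ)) h
        dsimp only
        rw [this]
        push_cast [hA j, hB j, hC j]
        ring
      have hNaev : ∀ᶠ j in atTop, ((Naf j : ℕ):ℝ) = (2*a₀) * l j + (((n - f : ℚ)):ℝ) := by
        filter_upwards [hev (fun j => 2*(a j) + n - f) (2*a₀) (((n - f : ℚ)):ℝ)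
          (by linarith) (fun j => by push_cast [hA j]; ring) 0] with j hj
        have h := toNat_spec _ (hNaden j) hj
        rw [hNadef]
        have : (((2*(a j) + n - f).num.toNat : ℕ):ℝ) = ((2*(a j) + n - f : ℚ):ℝ) := by
          exact_mod_cast congrArg (fun q : ℚ => (q:ℝ)) h
        dsimp only
        rw [this]
        push_cast [hA j]
        ring
      have hNbev : ∀ᶠ j in atTop, ((Nbf j : ℕ):ℝ) = (2*b₀) * l j + (((m - f : ℚ)):ℝ) := by
        filter_upwards [hev (fun j => 2*(b j) + m - f) (2*b₀) (((m - f : ℚ)):ℝ)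
          (by linarith) (fun j => by push_cast [hB j]; ring) 0] with j hj
        have h := toNat_spec _ (hNbden j) hj
        rw [hNbdef]
        have : (((2*(b j) + m - f).num.toNat : ℕ):ℝ) = ((2*(b j) + m - f : ℚ):ℝ) := by
          exact_mod_cast congrArg (fun q : ℚ => (q:ℝ)) h
        dsimp only
        rw [this]
        push_cast [hB j]
        ring
      have hNP2ev : ∀ᶠ j in atTop, ((NP2 j : ℕ):ℝ)
          = (a₀+b₀+c₀) * l j + (((n:ℚ):ℝ) + ((m:ℚ):ℝ) + 1) := by
        filter_upwards [hbspec] with j hj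
        rw [hNP2def]
        push_cast
        have : ((basef j : ℕ):ℝ) = ((a j + b j + c j + n + m : ℚ):ℝ) := by
          exact_mod_cast congrArg (fun q : ℚ => (q:ℝ)) hj
        rw [this, hbaselin j]
        push_cast
        ring
      have hW1ev : ∀ j, W1 j = (a₀+b₀+c₀) * l j + (((n:ℚ):ℝ) + ((m:ℚ):ℝ) + 3/2) := by
        intro j
        rw [hW1def, hxdef, hydef, hzcdef]
        dsimp only
        push_cast [hA j, hB j, hC j]
        ring
      have hW2ev : ∀ j, W2 j = (a₀+b₀-c₀) * l j + (((n:ℚ):ℝ) + ((m:ℚ):ℝ) + 1/2) := by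
        intro j
        rw [hW2def, hxdef, hydef, hzcdef]
        dsimp only
        push_cast [hA j, hB j, hC j]
        ring
      have hW3ev : ∀ j, W3 j = (b₀+c₀-a₀) * l j + (((m:ℚ):ℝ) - ((n:ℚ):ℝ) + 1/2) := by
        intro j
        rw [hW3def, hxdef, hydef, hzcdef]
        dsimp only
        push_cast [hA j, hB j, hC j]
        ring
      have hW4ev : ∀ j, W4 j = (a₀+c₀-b₀) * l j + (((n:ℚ):ℝ) - ((m:ℚ):ℝ) + 1/2) := by
        intro j
        rw [hW4def, hxdef, hydef, hzcdef]
        dsimp only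
        push_cast [hA j, hB j, hC j]
        ring
      have hxev : ∀ j, 2 * x j = (2*a₀) * l j + (2*((n:ℚ):ℝ) + 1) := by
        intro j
        rw [hxdef]
        dsimp only
        push_cast [hA j]
        ring
      have hyev : ∀ j, 2 * y j = (2*b₀) * l j + (2*((m:ℚ):ℝ) + 1) := by
        intro j
        rw [hydef]
        dsimp only
        push_cast [hB j]
        ring
      have hωaev : ∀ j, ωa j = (2*a₀) * l j + (((n:ℚ):ℝ) + ((f:ℚ):ℝ) + 1) := by
        intro j
        rw [hωadef]
        dsimp only
        push_cast [hA j]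
        ring
      have hωbev : ∀ j, ωb j = (2*b₀) * l j + (((m:ℚ):ℝ) + ((f:ℚ):ℝ) + 1) := by
        intro j
        rw [hωbdef]
        dsimp only
        push_cast [hB j]
        ring
      have hcore := core l hl k (DNM k) (DFN k) (DFM k) F2 hF2sum
        (a₀+b₀+c₀) (a₀+b₀-c₀) (b₀+c₀-a₀) (a₀+c₀-b₀) (2*a₀) (2*b₀)
        (by linarith) (by linarith) (by linarith) (by linarith) (by linarith) (by linarith)
        NP1 NP2 (NAf k) (NBf k) (NGf k) Naf Nbf W1 W2 W3 W4 x y uf vf ωa ωb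
        1 (((n:ℚ):ℝ) + ((m:ℚ):ℝ) + 1) (-(k:ℝ)) (-(((f - m - (k:ℚ) : ℚ)):ℝ))
        (-(((f - n - (k:ℚ) : ℚ)):ℝ)) (((n - f : ℚ)):ℝ) (((m - f : ℚ)):ℝ)
        (((n:ℚ):ℝ) + ((m:ℚ):ℝ) + 3/2) (((n:ℚ):ℝ) + ((m:ℚ):ℝ) + 1/2)
        (((m:ℚ):ℝ) - ((n:ℚ):ℝ) + 1/2) (((n:ℚ):ℝ) - ((m:ℚ):ℝ) + 1/2)
        (2*((n:ℚ):ℝ) + 1) (2*((m:ℚ):ℝ) + 1)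
        (((n:ℚ):ℝ) + ((f:ℚ):ℝ) + 1) (((m:ℚ):ℝ) + ((f:ℚ):ℝ) + 1)
        (Eventually.of_forall fun j => hNP1spec j)
        hNP2ev hNAev hNBev hNGev hNaev hNbev
        (Eventually.of_forall hW1ev) (Eventually.of_forall hW2ev)
        (Eventually.of_forall hW3ev) (Eventually.of_forall hW4ev)
        (Eventually.of_forall hxev) (Eventually.of_forall hyev)
        (Eventually.of_forall hωaev) (Eventually.of_forall hωbev)
        (Eventually.of_forall hu2) (Eventually.of_forall hv2)
        (Eventually.of_forall hu0) (Eventually.of_forall hv0)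
        (Eventually.of_forall hu1) (Eventually.of_forall hv1)
      have hcore' : Tendsto (fun j => |Real.sqrt (RR k j) - Tf k j|) atTop (nhds 0) := by
        refine hcore.congr (fun j => ?_)
        rw [hRRdef, hTdef]
        dsimp only
        rw [hE1, hE2]
      have heq : ∀ j, |XX k j - YY k j| = CC k * |Real.sqrt (RR k j) - Tf k j| := by
        intro j
        rw [hXXdef, hYYdef]
        dsimp only
        rw [if_pos (by rw [hConddef]; exact hc), if_pos (by rw [hConddef]; exact hc)]
        rw [show (-1:ℝ)^(basef j + k) * CC k * Real.sqrt (RR k j)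
            - (-1:ℝ)^(basef j + k) * CC k * Tf k j
            = ((-1:ℝ)^(basef j + k) * CC k) * (Real.sqrt (RR k j) - Tf k j) from by ring]
        rw [abs_mul, abs_mul, abs_pow, abs_neg, abs_one, one_pow, one_mul,
          abs_of_nonneg (le_of_lt (hCCpos k))]
      have := hcore'.const_mul (CC k)
      rw [mul_zero] at this
      refine this.congr (fun j => (heq j).symm)
    · -- inadmissible k : both sides vanish
      have hz : ∀ j, XX k j = 0 ∧ YY k j = 0 := by
        intro j
        constructor
        · rw [hXXdef]; dsimp only; rw [if_neg hc]
        · rw [hYYdef]; dsimp only; rw [if_neg hc]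
      refine tendsto_const_nhds.congr (fun j => ?_)
      rw [(hz j).1, (hz j).2]
      simp
  -- ===== re-express the goal with the named sequences =====
  show Tendsto (fun j =>
      |Real.sqrt (ωa j * ωb j) * sixJ (c j) (b j) (a j) f (a j + n) (b j + m)
        - msign (a j + b j + c j + f + m) * dmat f n m (θf j)|) atTop (nhds 0)
  -- ===== integer witnesses for signs =====
  obtain ⟨znm, hznm⟩ := (den1_iff _).mp hnm
  obtain ⟨zfn, hzfn⟩ := (den1_iff _).mp hfnden
  obtain ⟨zfm, hzfm⟩ := (den1_iff _).mp hfmden'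
  have hrel : zfm = znm + zfn := by
    have hq : ((zfm:ℤ):ℚ) = ((znm+zfn:ℤ):ℚ) := by
      push_cast
      rw [← hznm, ← hzfn, ← hzfm]; ring
    exact_mod_cast hq
  -- ===== dmat side =====
  have hY : ∀ᶠ j in atTop, msign (a j + b j + c j + f + m) * dmat f n m (θf j)
      = ∑ k ∈ Finset.range (F2+1), YY k j := by
    filter_upwards [hbspec] with j hbjQ
    obtain ⟨zP, hzP⟩ := (den1_iff _).mp (hPden j)
    have hbaseZ : (basef j : ℤ) = zP + znm := by
      have hq : ((basef j : ℤ):ℚ) = ((zP + znm : ℤ):ℚ) := by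
        push_cast
        have h' : ((basef j : ℕ):ℚ) = a j + b j + c j + n + m := hbjQ
        push_cast at h'
        linarith [hzP, hznm]
      exact_mod_cast hq
    have hmsP : msign (a j + b j + c j + f + m) = (-1:ℝ)^(zP + zfm) :=
      msign_int _ _ (by push_cast; linarith [hzP, hzfm])
    have hmsfn : msign (f - n) = (-1:ℝ)^zfn := msign_int _ _ (by rw [← hzfn])
    rw [dmat, hF2toNat, ← hS4vdef, ← mul_assoc, ← mul_assoc, Finset.mul_sum]
    refine Finset.sum_congr rfl (fun k _ => ?_)
    by_cases hck : Cond k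
    · have hck' := hck
      rw [hConddef] at hck'
      rw [if_pos hck']
      rw [hYYdef]; dsimp only
      rw [if_pos hck, hTdef, hCCdef]; dsimp only
      rw [hmsP, hmsfn]
      have hs := sign_eq (basef j) k zP znm zfm zfn hbaseZ hrel
      rw [← hs, hudef, hvdef]
      dsimp only
      ring
    · have hck' : ¬ (isNNInt (f-n-(k:ℚ)) ∧ isNNInt (f-m-(k:ℚ)) ∧ isNNInt (n+m+(k:ℚ))) := by
        rw [hConddef] at hck; exact hck
      rw [if_neg hck']
      rw [hYYdef]; dsimp only
      rw [if_neg hck]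
      ring
  -- ===== 6j side =====
  have hbigA : ∀ᶠ j in atTop, ((F2:ℕ):ℚ) ≤ a j + b j - c j :=
    hev _ (a₀+b₀-c₀) 0 (by linarith) (fun j => by push_cast [hA j, hB j, hC j]; ring) _
  have hbigB : ∀ᶠ j in atTop, (2*f:ℚ) ≤ b j + c j - a j :=
    hev _ (b₀+c₀-a₀) 0 (by linarith) (fun j => by push_cast [hA j, hB j, hC j]; ring) _
  have hbigG : ∀ᶠ j in atTop, (2*f:ℚ) ≤ a j + c j - b j :=
    hev _ (a₀+c₀-b₀) 0 (by linarith) (fun j => by push_cast [hA j, hB j, hC j]; ring) _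
  have hbigNa : ∀ᶠ j in atTop, (0:ℚ) ≤ 2*(a j) + n - f :=
    hev _ (2*a₀) (((n - f:ℚ)):ℝ) (by linarith) (fun j => by push_cast [hA j]; ring) _
  have hbigNb : ∀ᶠ j in atTop, (0:ℚ) ≤ 2*(b j) + m - f :=
    hev _ (2*b₀) (((m - f:ℚ)):ℝ) (by linarith) (fun j => by push_cast [hB j]; ring) _
  have hbigP : ∀ᶠ j in atTop, (2*f:ℚ) ≤ a j + b j + c j :=
    hev _ (a₀+b₀+c₀) 0 (by linarith) (fun j => by push_cast [hA j, hB j, hC j]; ring) _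
  have hX : ∀ᶠ j in atTop, Real.sqrt (ωa j * ωb j) *
      sixJ (c j) (b j) (a j) f (a j + n) (b j + m) = ∑ k ∈ Finset.range (F2+1), XX k j := by
    have hf0 : (0:ℚ) ≤ f := le_trans (abs_nonneg m) hmf
    filter_upwards [hbspec, hbigA, hbigB, hbigG, hbigNa, hbigNb, hbigP] with j hbq hAj hBj hGj haj hbj hPj
    have hZj : basef j + F2 + 1
        ≤ 2 * ((c j + b j + a j + f + (a j + n) + (b j + m)).num.toNat) + 2 := by
      have hS6nn : (0:ℚ) ≤ c j + b j + a j + f + (a j + n) + (b j + m) := by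
        have u1 := (t1 j).1; have u2 := (t1 j).2.1; have u3 := (t1 j).2.2.1
        have u4 := (t3 j).2.1; have u5 := (t3 j).2.2.1
        linarith
      have hle := le_num_toNat _ hS6nn
      have hq : ((basef j + F2 + 1 : ℕ):ℚ)
          ≤ ((2 * ((c j + b j + a j + f + (a j + n) + (b j + m)).num.toNat) + 2 : ℕ):ℚ) := by
        push_cast
        rw [hbq, hF2q]
        have u1 := (t1 j).2.1; have u3 := (t1 j).2.2.1
        have w1 := hnabs.1; have w2 := hmabs.1
        linarith
      exact_mod_cast hq
    rw [sixJ, ← mul_assoc, sum_shift _ (basef j) F2 _ hZj]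
    rotate_left
    · -- vanishing below base
      intro z hz
      rw [if_neg]
      rintro ⟨-, c2', -, -, -, -, -⟩
      have e : ((z:ℚ) - c j - (a j + n) - (b j + m) : ℚ) = (z:ℚ) - ((basef j : ℕ):ℚ) := by
        rw [hbq]; ring
      rw [e] at c2'
      have hzq : ((z:ℚ)) < ((basef j : ℕ):ℚ) := by exact_mod_cast hz
      linarith [c2'.1]
    · -- vanishing above base + F2
      intro z hz
      rw [if_neg]
      rintro ⟨-, -, -, -, -, -, c7'⟩
      have e : (c j + a j + (b j + m) + f - (z:ℚ) : ℚ)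
          = ((basef j : ℕ):ℚ) + ((Ffn:ℕ):ℚ) - (z:ℚ) := by
        rw [hbq, hFfn]; ring
      rw [e] at c7'
      have hzq : ((basef j + F2 : ℕ):ℚ) < (z:ℚ) := by exact_mod_cast hz
      have hFle : ((Ffn:ℕ):ℚ) ≤ ((F2:ℕ):ℚ) := by
        have : Ffn ≤ F2 := by rw [hF2def]; omega
        exact_mod_cast this
      push_cast at hzq
      linarith [c7'.1]
    rw [Finset.mul_sum]
    refine Finset.sum_congr rfl (fun k hk => ?_)
    have hkF2 : (k:ℚ) ≤ ((F2:ℕ):ℚ) := by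
      exact_mod_cast Nat.lt_succ_iff.mp (Finset.mem_range.mp hk)
    have e1 : ((basef j + k : ℕ):ℚ) - c j - b j - a j = n + m + (k:ℚ) := by
      push_cast [hbq]; ring
    have e6 : (c j + b j + f + (a j + n) - ((basef j + k : ℕ):ℚ) : ℚ) = f - m - (k:ℚ) := by
      push_cast [hbq]; ring
    have e7 : (c j + a j + (b j + m) + f - ((basef j + k : ℕ):ℚ) : ℚ) = f - n - (k:ℚ) := by
      push_cast [hbq]; ring
    by_cases hck : Cond k
    · have hck' := hck
      rw [hConddef] at hck'
      have hDNMk : ((DNM k : ℕ):ℚ) = n+m+(k:ℚ) := toNat_spec _ hck'.2.2.2 hck'.2.2.1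
      have hDFNk : ((DFN k : ℕ):ℚ) = f-n-(k:ℚ) := toNat_spec _ hck'.1.2 hck'.1.1
      have hDFMk : ((DFM k : ℕ):ℚ) = f-m-(k:ℚ) := toNat_spec _ hck'.2.1.2 hck'.2.1.1
      have e2 : ((basef j + k : ℕ):ℚ) - c j - (a j + n) - (b j + m) = (k:ℚ) := by
        push_cast [hbq]; ring
      have e3 : (b j + a j + (a j + n) + (b j + m) - ((basef j + k : ℕ):ℚ) : ℚ)
          = a j + b j - c j - (k:ℚ) := by push_cast [hbq]; ring
      have e4 : ((basef j + k : ℕ):ℚ) - f - (a j + n) - a j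
          = b j + c j - a j - (f - m - (k:ℚ)) := by push_cast [hbq]; ring
      have e5 : ((basef j + k : ℕ):ℚ) - b j - f - (b j + m)
          = a j + c j - b j - (f - n - (k:ℚ)) := by push_cast [hbq]; ring
      have hNAq : ((NAf k j : ℕ):ℚ) = a j + b j - c j - (k:ℚ) :=
        toNat_spec _ (hαden j k) (by linarith)
      have hNBq : ((NBf k j : ℕ):ℚ) = b j + c j - a j - (f - m - (k:ℚ)) := by
        refine toNat_spec _ (hβden j k) ?_
        have w2 := hmabs.1
        have : (0:ℚ) ≤ (k:ℚ) := by positivity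
        linarith
      have hNGq : ((NGf k j : ℕ):ℚ) = a j + c j - b j - (f - n - (k:ℚ)) := by
        refine toNat_spec _ (hγden j k) ?_
        have w1 := hnabs.1
        have : (0:ℚ) ≤ (k:ℚ) := by positivity
        linarith
      have hNaq : ((Naf j : ℕ):ℚ) = 2*(a j) + n - f := toNat_spec _ (hNaden j) haj
      have hNbq : ((Nbf j : ℕ):ℚ) = 2*(b j) + m - f := toNat_spec _ (hNbden j) hbj
      have hNP1q : ((NP1 j : ℕ):ℚ) = a j + b j + c j + 1 := by
        rw [hNP1def]; push_cast [hPtoNat j]; ring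
      have hNP2q : ((NP2 j : ℕ):ℚ) = a j + b j + c j + n + m + 1 := by
        rw [hNP2def]; push_cast [hbq]; ring
      have c1 : isNNInt (((basef j + k : ℕ):ℚ) - c j - b j - a j) := by
        rw [e1]; exact hck'.2.2
      have c2 : isNNInt (((basef j + k : ℕ):ℚ) - c j - (a j + n) - (b j + m)) := by
        rw [e2]; exact ⟨by positivity, Rat.den_natCast k⟩
      have c3 : isNNInt (b j + a j + (a j + n) + (b j + m) - ((basef j + k : ℕ):ℚ)) := by
        rw [e3]; exact ⟨by linarith, hαden j k⟩
      have c4 : isNNInt (((basef j + k : ℕ):ℚ) - f - (a j + n) - a j) := by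
        rw [e4]
        refine ⟨?_, hβden j k⟩
        have w2 := hmabs.1
        have : (0:ℚ) ≤ (k:ℚ) := by positivity
        linarith
      have c5 : isNNInt (((basef j + k : ℕ):ℚ) - b j - f - (b j + m)) := by
        rw [e5]
        refine ⟨?_, hγden j k⟩
        have w1 := hnabs.1
        have : (0:ℚ) ≤ (k:ℚ) := by positivity
        linarith
      have c6 : isNNInt (c j + b j + f + (a j + n) - ((basef j + k : ℕ):ℚ)) := by
        rw [e6]; exact hck'.2.1
      have c7 : isNNInt (c j + a j + (b j + m) + f - ((basef j + k : ℕ):ℚ)) := by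
        rw [e7]; exact hck'.1
      rw [if_pos ⟨c1, c2, c3, c4, c5, c6, c7⟩]
      rw [hXXdef]; dsimp only
      rw [if_pos hck]
      have hnp1 : NP1 j + DNM k = basef j + k + 1 := by
        have hq : ((NP1 j + DNM k : ℕ):ℚ) = ((basef j + k + 1 : ℕ):ℚ) := by
          push_cast [hNP1q, hDNMk, hbq]
          push_cast at hNP1q hDNMk
          linarith
        exact_mod_cast hq
      have hnp2 : NP2 j + k = basef j + k + 1 := by
        have hq : ((NP2 j + k : ℕ):ℚ) = ((basef j + k + 1 : ℕ):ℚ) := by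
          push_cast [hbq]
          push_cast at hNP2q
          linarith
        exact_mod_cast hq
      have hωaj : (0:ℝ) ≤ ωa j := by
        rw [hωadef]; dsimp only
        have u3 := (t1 j).2.2.1
        have u4 := (t3 j).2.1
        have : (0:ℚ) ≤ 2*(a j) + n + f + 1 := by linarith
        exact_mod_cast this
      have hωbj : (0:ℝ) ≤ ωb j := by
        rw [hωbdef]; dsimp only
        have u2 := (t1 j).2.1
        have u5 := (t3 j).2.2.1
        have : (0:ℚ) ≤ 2*(b j) + m + f + 1 := by linarith
        exact_mod_cast this
      have hRRnn : (0:ℝ) ≤ RR k j := by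
        rw [hRRdef]; dsimp only
        refine mul_nonneg (mul_nonneg ?_ (div_nonneg hωaj (by positivity)))
          (div_nonneg hωbj (by positivity))
        positivity
      -- unfold everything and rewrite factorials
      simp only [tri]
      rw [hCCdef, hS4vdef]; dsimp only
      rw [e1, e2, e3, e4, e5, e6, e7]
      rw [hfact_nat (DNM k) _ hDNMk,
          hfact_nat k ((k:ℕ):ℚ) rfl,
          hfact_nat (NAf k j) _ hNAq,
          hfact_nat (NBf k j) _ hNBq,
          hfact_nat (NGf k j) _ hNGq,
          hfact_nat (DFM k) _ hDFMk,
          hfact_nat (DFN k) _ hDFNk,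
          hfact_nat Ffn' _ hFfn',
          hfact_nat Ffn _ hFfn,
          hfact_nat Ffm' _ hFfm',
          hfact_nat Ffm _ hFfm,
          hfact_nat (NBf k j + DFM k) (c j + b j - a j)
            (by push_cast; rw [hNBq, hDFMk]; ring),
          hfact_nat (NGf k j + DFN k) (c j - b j + a j)
            (by push_cast; rw [hNGq, hDFNk]; ring),
          hfact_nat (NAf k j + k) (-c j + b j + a j)
            (by push_cast; rw [hNAq]; ring),
          hfact_nat (NP1 j) (c j + b j + a j + 1)
            (by rw [hNP1q]; ring),
          hfact_nat Ffn (a j + f - (a j + n)) (by rw [hFfn]; ring),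
          hfact_nat (Naf j) (a j - f + (a j + n)) (by rw [hNaq]; ring),
          hfact_nat Ffn' (-a j + f + (a j + n)) (by rw [hFfn']; ring),
          hfact_nat (Naf j + (F2+1)) (a j + f + (a j + n) + 1)
            (by push_cast; rw [hNaq, hF2q]; ring),
          hfact_nat (NGf k j + DFM k) (c j + (a j + n) - (b j + m))
            (by push_cast; rw [hNGq, hDFMk]; ring),
          hfact_nat (NBf k j + DFN k) (c j - (a j + n) + (b j + m))
            (by push_cast; rw [hNBq, hDFNk]; ring),
          hfact_nat (NAf k j + DNM k) (-c j + (a j + n) + (b j + m))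
            (by push_cast; rw [hNAq, hDNMk]; ring),
          hfact_nat (NP2 j) (c j + (a j + n) + (b j + m) + 1)
            (by rw [hNP2q]; ring),
          hfact_nat Ffm (b j + f - (b j + m)) (by rw [hFfm]; ring),
          hfact_nat (Nbf j) (b j - f + (b j + m)) (by rw [hNbq]; ring),
          hfact_nat Ffm' (-b j + f + (b j + m)) (by rw [hFfm']; ring),
          hfact_nat (Nbf j + (F2+1)) (b j + f + (b j + m) + 1)
            (by push_cast; rw [hNbq, hF2q]; ring)]
      apply sign_split
      refine sq_cancel _ _ (by positivity)
        (mul_nonneg (div_nonneg (Real.sqrt_nonneg _) (by positivity)) (Real.sqrt_nonneg _)) ?_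
      simp only [mul_pow, div_pow]
      rw [Real.sq_sqrt hRRnn, Real.sq_sqrt (mul_nonneg hωaj hωbj),
        Real.sq_sqrt (show (0:ℝ) ≤ (Nat.factorial (NBf k j + DFM k) : ℝ)
            * (Nat.factorial (NGf k j + DFN k)) * (Nat.factorial (NAf k j + k))
            / (Nat.factorial (NP1 j))
            * ((Nat.factorial Ffn : ℝ) * (Nat.factorial (Naf j)) * (Nat.factorial Ffn')
              / (Nat.factorial (Naf j + (F2+1))))
            * ((Nat.factorial (NGf k j + DFM k) : ℝ) * (Nat.factorial (NBf k j + DFN k))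
              * (Nat.factorial (NAf k j + DNM k)) / (Nat.factorial (NP2 j)))
            * ((Nat.factorial Ffm : ℝ) * (Nat.factorial (Nbf j)) * (Nat.factorial Ffm')
              / (Nat.factorial (Nbf j + (F2+1)))) from by positivity),
        Real.sq_sqrt (show (0:ℝ) ≤ (Nat.factorial Ffn' : ℝ) * (Nat.factorial Ffn)
            * (Nat.factorial Ffm') * (Nat.factorial Ffm) from by positivity)]
      rw [hRRdef]; dsimp only
      rw [hnp1, hnp2]
      have z01 : (Nat.factorial (NP1 j) : ℝ) ≠ 0 := by positivity
      have z02 : (Nat.factorial (NP2 j) : ℝ) ≠ 0 := by positivity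
      have z03 : (Nat.factorial (NAf k j) : ℝ) ≠ 0 := by positivity
      have z04 : (Nat.factorial (NBf k j) : ℝ) ≠ 0 := by positivity
      have z05 : (Nat.factorial (NGf k j) : ℝ) ≠ 0 := by positivity
      have z06 : (Nat.factorial (Naf j) : ℝ) ≠ 0 := by positivity
      have z07 : (Nat.factorial (Nbf j) : ℝ) ≠ 0 := by positivity
      have z08 : (Nat.factorial (Naf j + (F2+1)) : ℝ) ≠ 0 := by positivity
      have z09 : (Nat.factorial (Nbf j + (F2+1)) : ℝ) ≠ 0 := by positivity
      have z10 : (Nat.factorial k : ℝ) ≠ 0 := by positivity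
      have z11 : (Nat.factorial (DNM k) : ℝ) ≠ 0 := by positivity
      have z12 : (Nat.factorial (DFN k) : ℝ) ≠ 0 := by positivity
      have z13 : (Nat.factorial (DFM k) : ℝ) ≠ 0 := by positivity
      field_simp
    · rw [hXXdef]; dsimp only
      rw [if_neg hck, if_neg, mul_zero]
      rintro ⟨c1', -, -, -, -, c6', c7'⟩
      rw [e1] at c1'; rw [e6] at c6'; rw [e7] at c7'
      exact hck (by rw [hConddef]; exact ⟨c7', c6', c1'⟩)
  -- ===== assembly =====
  have hsum0 : Tendsto (fun j => ∑ k ∈ Finset.range (F2+1), |XX k j - YY k j|) atTop (nhds 0) := by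
    have := tendsto_finset_sum (Finset.range (F2+1)) (fun k _ => hterm k)
    simpa using this
  refine squeeze_zero' (Eventually.of_forall (fun j => abs_nonneg _)) ?_ hsum0
  filter_upwards [hX, hY] with j hXj hYj
  rw [hXj, hYj, ← Finset.sum_sub_distrib]
  exact Finset.abs_sum_le_sum_abs _ _




end Aux5


/-- Theorem 3: asymptotics of the 6j symbol under the scaling `a = λa₀, b = λb₀, c = λc₀`. -/
theorem stmt_8 (f m n : ℚ) (hf : isHalfInt f) (hm : isHalfInt m) (hn : isHalfInt n)
    (hmf : |m| ≤ f) (hnf : |n| ≤ f)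
    (a₀ b₀ c₀ : ℝ) (ha₀ : 0 < a₀) (hb₀ : 0 < b₀) (hc₀ : 0 < c₀)
    (h1 : c₀ < a₀ + b₀) (h2 : a₀ < b₀ + c₀) (h3 : b₀ < a₀ + c₀) :
    ∀ ε : ℝ, 0 < ε → ∃ Λ : ℝ, ∀ (l : ℝ) (a b c : ℚ),
      (a : ℝ) = l * a₀ → (b : ℝ) = l * b₀ → (c : ℝ) = l * c₀ →
      sixJAdm c b a f (a + n) (b + m) →
      Λ ≤ l →
      |Real.sqrt (((2*a + n + f + 1 : ℚ) : ℝ) * ((2*b + m + f + 1 : ℚ) : ℝ)) *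
          sixJ c b a f (a + n) (b + m)
        - msign (a + b + c + f + m) *
          dmat f n m (Real.arccos (
            ((((a + n : ℚ) : ℝ) + 1/2)^2 + (((b + m : ℚ) : ℝ) + 1/2)^2 - ((c : ℝ) + 1/2)^2)
            / (2 * (((a + n : ℚ) : ℝ) + 1/2) * (((b + m : ℚ) : ℝ) + 1/2))))| < ε := by
  intro ε hε
  by_cases hfn : (f+n).den = 1
  · -- main case
    by_contra hcon
    push_neg at hcon
    have hcon' : ∀ j : ℕ, ∃ l : ℝ, ∃ a b c : ℚ,
        ((a : ℝ) = l * a₀ ∧ (b : ℝ) = l * b₀ ∧ (c : ℝ) = l * c₀ ∧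
          sixJAdm c b a f (a + n) (b + m) ∧ (j:ℝ) ≤ l) ∧
        ε ≤ |Real.sqrt (((2*a + n + f + 1 : ℚ) : ℝ) * ((2*b + m + f + 1 : ℚ) : ℝ)) *
          sixJ c b a f (a + n) (b + m)
        - msign (a + b + c + f + m) *
          dmat f n m (Real.arccos (
            ((((a + n : ℚ) : ℝ) + 1/2)^2 + (((b + m : ℚ) : ℝ) + 1/2)^2 - ((c : ℝ) + 1/2)^2)
            / (2 * (((a + n : ℚ) : ℝ) + 1/2) * (((b + m : ℚ) : ℝ) + 1/2))))| := by
      intro j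
      obtain ⟨l, a, b, c, hA, hB, hC, hAdm, hle, hbig⟩ := hcon (j : ℝ)
      exact ⟨l, a, b, c, ⟨hA, hB, hC, hAdm, hle⟩, hbig⟩
    choose L A B C hprops hbig using hcon'
    have hL : Filter.Tendsto L Filter.atTop Filter.atTop := by
      apply Filter.tendsto_atTop_mono (fun j => (hprops j).2.2.2.2)
      exact tendsto_natCast_atTop_atTop
    have hT := Aux5.main_tendsto f m n hf hm hn hmf hnf hfn a₀ b₀ c₀ ha₀ hb₀ hc₀ h1 h2 h3
      L hL A B C (fun j => (hprops j).1) (fun j => (hprops j).2.1) (fun j => (hprops j).2.2.1)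
      (fun j => (hprops j).2.2.2.1)
    have := (hT.eventually (eventually_lt_nhds hε)).exists
    obtain ⟨j, hj⟩ := this
    exact absurd (hbig j) (not_le.mpr hj)
  · -- degenerate case : both terms vanish
    refine ⟨0, fun l a b c hA hB hC hAdm hl => ?_⟩
    obtain ⟨h6, hms⟩ := Aux3.degenerate f m n a b c hf hn hfn hAdm.1.2.2.2.2.2.2
    rw [h6, dmat, hms, mul_zero, zero_mul, zero_mul, mul_zero, sub_zero, abs_zero]
    exact hε
end

section
/- Under the substitution z = a+b+c+m+n+t, the Racah sum defining the 6j symbol { c b a ; f a+n b+m }, multiplied by √((2a+n+f+1)(2b+m+f+1)), equals (−1)^(a+b+c+m+n) [(f+m)!(f−m)!(f+n)!(f−n)!]^(1/2) · Σ_t (−1)^t [Φ₁Φ₂Φ₃Φ₄Φ₅Φ₆]^(1/2) / [t!(f−m−t)!(f−n−t)!(m+n+t)!], where Φ₁ = (2a+n−f)!/(2a+n+f)!, Φ₂ = (2b+m−f)!/(2b+m+f)!, Φ₃ = (a+b−c)!(a+b−c+m+n)!/[(a+b−c−t)!]², Φ₄ = (a−b+c)!(a−b+c+n−m)!/[(a−b+c+n−f+t)!]²,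 Φ₅ = (−a+b+c)!(−a+b+c+m−n)!/[(−a+b+c+m−f+t)!]², Φ₆ = [(a+b+c+m+n+1+t)!]²/[(a+b+c+1)!(a+b+c+m+n+1)!]. -/
open Real Filter

private lemma hfact_pos (q : ℚ) : 0 < hfact q := by
  unfold hfact; exact_mod_cast Nat.factorial_pos _
private lemma hfact_ne (q : ℚ) : hfact q ≠ 0 := (hfact_pos q).ne'
private lemma hfact_cast (n : ℕ) : hfact (n:ℚ) = (Nat.factorial n : ℝ) := by
  unfold hfact; norm_num
private lemma nnint_cast {q : ℚ} (h : isNNInt q) : ((q.num.toNat : ℚ)) = q := by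
  have h1 : (q.num : ℚ) = q := Rat.coe_int_num_of_den_eq_one h.2
  have h0 : 0 ≤ q.num := Rat.num_nonneg.2 h.1
  have h2 : ((q.num.toNat : ℤ) : ℚ) = (q.num : ℚ) := by rw [Int.toNat_of_nonneg h0]
  exact_mod_cast h2.trans h1
private lemma hfact_succ {q : ℚ} (h : isNNInt q) :
    hfact (q+1) = (((q:ℝ))+1) * hfact q := by
  have hk := nnint_cast h
  rw [← hk, show ((q.num.toNat:ℚ)+1) = ((q.num.toNat+1:ℕ):ℚ) by push_cast; ring, hfact_cast,
    hfact_cast, Nat.factorial_succ]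
  push_cast; ring
private lemma msign_int {q : ℚ} (h : q.den = 1) : msign q = (-1:ℝ)^q.num := by
  unfold msign
  have h1 : ((q:ℝ)) = ((q.num:ℚ):ℝ) := by
    exact_mod_cast congrArg (fun x : ℚ => (x:ℝ)) (Rat.coe_int_num_of_den_eq_one h).symm
  rw [h1]
  simpa using Real.cos_add_int_mul_pi 0 q.num

private lemma term_eq (a b c f m n : ℚ) (z t : ℕ)
    (hzt : (z:ℚ) = a+b+c+m+n+t)
    (h2af : isNNInt (2*a+n+f)) (h2bf : isNNInt (2*b+m+f))
    (hS : (a+b+c+m+n).den = 1) :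
    Real.sqrt (((2*a + n + f + 1 : ℚ) : ℝ) * ((2*b + m + f + 1 : ℚ) : ℝ) *
        (tri c b a * tri a f (a+n) * tri c (a+n) (b+m) * tri b f (b+m))) *
      ((-1:ℝ)^z * (Nat.factorial (z+1) : ℝ) /
        (hfact ((z:ℚ)-c-b-a) * hfact ((z:ℚ)-c-(a+n)-(b+m)) * hfact (b+a+(a+n)+(b+m)-(z:ℚ)) *
          hfact ((z:ℚ)-f-(a+n)-a) * hfact ((z:ℚ)-b-f-(b+m)) * hfact (c+b+f+(a+n)-(z:ℚ)) *
          hfact (c+a+(b+m)+f-(z:ℚ))))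
    = (msign (a + b + c + m + n) *
        Real.sqrt (hfact (f+m) * hfact (f-m) * hfact (f+n) * hfact (f-n))) *
      ((-1:ℝ)^t *
        Real.sqrt (
          (hfact (2*a + n - f) / hfact (2*a + n + f)) *
          (hfact (2*b + m - f) / hfact (2*b + m + f)) *
          (hfact (a + b - c) * hfact (a + b - c + m + n) / (hfact (a + b - c - (t:ℚ)))^2) *
          (hfact (a - b + c) * hfact (a - b + c + n - m) /
            (hfact (a - b + c + n - f + (t:ℚ)))^2) *
          (hfact (-a + b + c) * hfact (-a + b + c + m - n) /
            (hfact (-a + b + c + m - f + (t:ℚ)))^2) *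
          ((hfact (a + b + c + m + n + 1 + (t:ℚ)))^2 /
            (hfact (a + b + c + 1) * hfact (a + b + c + m + n + 1))))
        / ((Nat.factorial t : ℝ) * hfact (f - m - (t:ℚ)) * hfact (f - n - (t:ℚ)) *
            hfact (m + n + (t:ℚ)))) := by
  rw [show ((z:ℚ)-c-b-a) = m+n+(t:ℚ) from by rw [hzt]; ring,
      show ((z:ℚ)-c-(a+n)-(b+m)) = ((t:ℚ)) from by rw [hzt]; ring,
      show (b+a+(a+n)+(b+m)-(z:ℚ)) = a+b-c-(t:ℚ) from by rw [hzt]; ring,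
      show ((z:ℚ)-f-(a+n)-a) = -a+b+c+m-f+(t:ℚ) from by rw [hzt]; ring,
      show ((z:ℚ)-b-f-(b+m)) = a-b+c+n-f+(t:ℚ) from by rw [hzt]; ring,
      show (c+b+f+(a+n)-(z:ℚ)) = f-m-(t:ℚ) from by rw [hzt]; ring,
      show (c+a+(b+m)+f-(z:ℚ)) = f-n-(t:ℚ) from by rw [hzt]; ring,
      hfact_cast t]
  rw [tri, tri, tri, tri]
  rw [show (c+b-a : ℚ) = -a+b+c from by ring, show (c-b+a:ℚ) = a-b+c from by ring,
      show (-c+b+a:ℚ) = a+b-c from by ring, show (c+b+a+1:ℚ) = a+b+c+1 from by ring,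
      show (a+f-(a+n):ℚ) = f-n from by ring, show (a-f+(a+n):ℚ) = 2*a+n-f from by ring,
      show (-a+f+(a+n):ℚ) = f+n from by ring, show (a+f+(a+n)+1:ℚ) = 2*a+n+f+1 from by ring,
      show (c+(a+n)-(b+m):ℚ) = a-b+c+n-m from by ring,
      show (c-(a+n)+(b+m):ℚ) = -a+b+c+m-n from by ring,
      show (-c+(a+n)+(b+m):ℚ) = a+b-c+m+n from by ring,
      show (c+(a+n)+(b+m)+1:ℚ) = a+b+c+m+n+1 from by ring,
      show (b+f-(b+m):ℚ) = f-m from by ring, show (b-f+(b+m):ℚ) = 2*b+m-f from by ring,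
      show (-b+f+(b+m):ℚ) = f+m from by ring, show (b+f+(b+m)+1:ℚ) = 2*b+m+f+1 from by ring]
  rw [hfact_succ h2af, hfact_succ h2bf]
  rw [show ((2*a+n+f+1:ℚ):ℝ) = ((2*a+n+f:ℚ):ℝ)+1 from by push_cast; ring,
      show ((2*b+m+f+1:ℚ):ℝ) = ((2*b+m+f:ℚ):ℝ)+1 from by push_cast; ring]
  rw [show ((Nat.factorial (z+1) : ℝ)) = hfact (a+b+c+m+n+1+(t:ℚ)) from by
        rw [show (a+b+c+m+n+1+(t:ℚ)) = (((z+1:ℕ):ℚ)) from by push_cast; rw [hzt]; ring,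
          hfact_cast]]
  rw [show ((-1:ℝ))^z = msign (a+b+c+m+n) * (-1:ℝ)^t from by
        rw [msign_int hS]
        have hzint : (z:ℤ) = (a+b+c+m+n).num + t := by
          have hKq : (((a+b+c+m+n).num:ℤ):ℚ) = a+b+c+m+n :=
            Rat.coe_int_num_of_den_eq_one hS
          have : ((z:ℤ):ℚ) = (((a+b+c+m+n).num + t : ℤ):ℚ) := by
            push_cast
            rw [hzt, hKq]
          exact_mod_cast this
        calc ((-1:ℝ))^z = ((-1:ℝ))^((z:ℤ)) := (zpow_natCast _ _).symm
          _ = _ := by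
            rw [hzint, zpow_add₀ (by norm_num : (-1:ℝ) ≠ 0), zpow_natCast]]
  have hA1 := hfact_pos (a+b-c)
  have hA2 := hfact_pos (a-b+c)
  have hA3 := hfact_pos (-a+b+c)
  have hA4 := hfact_pos (a+b+c+1)
  have hB1 := hfact_pos (f-n)
  have hB2 := hfact_pos (2*a+n-f)
  have hB3 := hfact_pos (f+n)
  have hB4 := hfact_pos (2*a+n+f)
  have hC1 := hfact_pos (a-b+c+n-m)
  have hC2 := hfact_pos (-a+b+c+m-n)
  have hC3 := hfact_pos (a+b-c+m+n)
  have hC4 := hfact_pos (a+b+c+m+n+1)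
  have hD1 := hfact_pos (f-m)
  have hD2 := hfact_pos (2*b+m-f)
  have hD3 := hfact_pos (f+m)
  have hD4 := hfact_pos (2*b+m+f)
  have hW := hfact_pos (a+b+c+m+n+1+(t:ℚ))
  have hx1 := hfact_pos (a+b-c-(t:ℚ))
  have hx2 := hfact_pos (a-b+c+n-f+(t:ℚ))
  have hx3 := hfact_pos (-a+b+c+m-f+(t:ℚ))
  have hx5 := hfact_pos (f-m-(t:ℚ))
  have hx6 := hfact_pos (f-n-(t:ℚ))
  have hx7 := hfact_pos (m+n+(t:ℚ))
  have hP1 : (0:ℝ) < ((2*a+n+f:ℚ):ℝ)+1 := by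
    have h1 : (0:ℚ) ≤ 2*a+n+f := h2af.1
    have h2 : (0:ℝ) ≤ ((2*a+n+f:ℚ):ℝ) := by exact_mod_cast h1
    linarith
  have hP2 : (0:ℝ) < ((2*b+m+f:ℚ):ℝ)+1 := by
    have h1 : (0:ℚ) ≤ 2*b+m+f := h2bf.1
    have h2 : (0:ℝ) ≤ ((2*b+m+f:ℚ):ℝ) := by exact_mod_cast h1
    linarith
  have hFt : (0:ℝ) < (Nat.factorial t:ℝ) := by exact_mod_cast Nat.factorial_pos t
  set A1 := hfact (a+b-c)
  set A2 := hfact (a-b+c)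
  set A3 := hfact (-a+b+c)
  set A4 := hfact (a+b+c+1)
  set B1 := hfact (f-n)
  set B2 := hfact (2*a+n-f)
  set B3 := hfact (f+n)
  set B4 := hfact (2*a+n+f)
  set C1 := hfact (a-b+c+n-m)
  set C2 := hfact (-a+b+c+m-n)
  set C3 := hfact (a+b-c+m+n)
  set C4 := hfact (a+b+c+m+n+1)
  set D1 := hfact (f-m)
  set D2 := hfact (2*b+m-f)
  set D3 := hfact (f+m)
  set D4 := hfact (2*b+m+f)
  set W := hfact (a+b+c+m+n+1+(t:ℚ))
  set x1 := hfact (a+b-c-(t:ℚ))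
  set x2 := hfact (a-b+c+n-f+(t:ℚ))
  set x3 := hfact (-a+b+c+m-f+(t:ℚ))
  set x5 := hfact (f-m-(t:ℚ))
  set x6 := hfact (f-n-(t:ℚ))
  set x7 := hfact (m+n+(t:ℚ))
  set P1 := ((2*a+n+f:ℚ):ℝ)+1
  set P2 := ((2*b+m+f:ℚ):ℝ)+1
  set ms := msign (a+b+c+m+n)
  set Ft := (Nat.factorial t : ℝ)
  have hYW : (0:ℝ) ≤ W/(x1*x2*x3) := (div_pos hW (mul_pos (mul_pos hx1 hx2) hx3)).le
  have hBnn : (0:ℝ) ≤ D3*D1*B3*B1 :=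
    (mul_pos (mul_pos (mul_pos hD3 hD1) hB3) hB1).le
  have hXpos : (0:ℝ) < P1 * P2 * (A3*A2*A1/A4 * (B1*B2*B3/(P1*B4)) * (C1*C2*C3/C4) *
      (D1*D2*D3/(P2*D4))) := by
    have t1 : (0:ℝ) < A3*A2*A1/A4 := div_pos (mul_pos (mul_pos hA3 hA2) hA1) hA4
    have t2 : (0:ℝ) < B1*B2*B3/(P1*B4) :=
      div_pos (mul_pos (mul_pos hB1 hB2) hB3) (mul_pos hP1 hB4)
    have t3 : (0:ℝ) < C1*C2*C3/C4 := div_pos (mul_pos (mul_pos hC1 hC2) hC3) hC4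
    have t4 : (0:ℝ) < D1*D2*D3/(P2*D4) :=
      div_pos (mul_pos (mul_pos hD1 hD2) hD3) (mul_pos hP2 hD4)
    exact mul_pos (mul_pos hP1 hP2) (mul_pos (mul_pos (mul_pos t1 t2) t3) t4)
  have key : Real.sqrt (D3*D1*B3*B1) *
      Real.sqrt (B2/B4*(D2/D4)*(A1*C3/x1^2)*(A2*C1/x2^2)*(A3*C2/x3^2)*(W^2/(A4*C4)))
      = Real.sqrt (P1 * P2 * (A3*A2*A1/A4 * (B1*B2*B3/(P1*B4)) * (C1*C2*C3/C4) *
          (D1*D2*D3/(P2*D4)))) * (W/(x1*x2*x3)) := by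
    rw [← Real.sqrt_mul hBnn, ← Real.sqrt_sq hYW, ← Real.sqrt_mul hXpos.le]
    congr 1
    field_simp
  linear_combination (-(ms * ((-1:ℝ))^t / (Ft*x5*x6*x7))) * key

private lemma rat_le_num {q : ℚ} (h : 0 ≤ q) : q ≤ (q.num:ℚ) := by
  conv_lhs => rw [← Rat.num_div_den q]
  rw [div_le_iff₀ (by exact_mod_cast q.pos)]
  have hnum : (0:ℚ) ≤ (q.num:ℚ) := by exact_mod_cast Rat.num_nonneg.2 h
  have hden : (1:ℚ) ≤ (q.den:ℚ) := by exact_mod_cast q.pos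
  nlinarith

/-- The exact rearrangement of the 6j symbol used in the proof of Theorem 3:
substitution `z = a+b+c+m+n+t` in the Racah sum for `{c b a; f a+n b+m}`. -/
theorem stmt_17 (a b c f m n : ℚ)
    (ha : isHalfInt a) (hb : isHalfInt b) (hc : isHalfInt c)
    (hf : isHalfInt f) (hm : isHalfInt m) (hn : isHalfInt n)
    (hadm : sixJAdm c b a f (a + n) (b + m)) :
    Real.sqrt (((2*a + n + f + 1 : ℚ) : ℝ) * ((2*b + m + f + 1 : ℚ) : ℝ)) *
      sixJ c b a f (a + n) (b + m)
    = msign (a + b + c + m + n) *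
      Real.sqrt (hfact (f+m) * hfact (f-m) * hfact (f+n) * hfact (f-n)) *
      ∑ t ∈ Finset.range ((2*f).num.toNat + 1),
        if isNNInt (f - m - (t:ℚ)) ∧ isNNInt (f - n - (t:ℚ)) ∧ isNNInt (m + n + (t:ℚ)) ∧
           isNNInt (a + b - c - (t:ℚ)) ∧ isNNInt (a - b + c + n - f + (t:ℚ)) ∧
           isNNInt (-a + b + c + m - f + (t:ℚ))
        then (-1:ℝ)^t *
          Real.sqrt (
            (hfact (2*a + n - f) / hfact (2*a + n + f)) *
            (hfact (2*b + m - f) / hfact (2*b + m + f)) *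
            (hfact (a + b - c) * hfact (a + b - c + m + n) / (hfact (a + b - c - (t:ℚ)))^2) *
            (hfact (a - b + c) * hfact (a - b + c + n - m) /
              (hfact (a - b + c + n - f + (t:ℚ)))^2) *
            (hfact (-a + b + c) * hfact (-a + b + c + m - n) /
              (hfact (-a + b + c + m - f + (t:ℚ)))^2) *
            ((hfact (a + b + c + m + n + 1 + (t:ℚ)))^2 /
              (hfact (a + b + c + 1) * hfact (a + b + c + m + n + 1))))
          / ((Nat.factorial t : ℝ) * hfact (f - m - (t:ℚ)) * hfact (f - n - (t:ℚ)) *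
              hfact (m + n + (t:ℚ)))
        else 0 := by
  obtain ⟨T1, T2, T3, T4⟩ := hadm
  obtain ⟨hc0, hb0, ha0, hT1a, hT1b, hT1c, hden1⟩ := T1
  obtain ⟨ha0', hf0, han0, hT2a, hT2b, hT2c, hden2⟩ := T2
  obtain ⟨hc0', han0', hbm0, hT3a, hT3b, hT3c, hden3⟩ := T3
  obtain ⟨hb0', hf0', hbm0', hT4a, hT4b, hT4c, hden4⟩ := T4
  have h2af : isNNInt (2*a+n+f) :=
    ⟨by linarith, by rw [show (2*a+n+f:ℚ) = a+f+(a+n) from by ring]; exact hden2⟩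
  have h2bf : isNNInt (2*b+m+f) :=
    ⟨by linarith, by rw [show (2*b+m+f:ℚ) = b+f+(b+m) from by ring]; exact hden4⟩
  have hS : (a+b+c+m+n).den = 1 := by
    rw [show (a+b+c+m+n:ℚ) = c+(a+n)+(b+m) from by ring]; exact hden3
  have hmf : m ≤ f := by linarith
  have hmlow : -f ≤ m := by linarith
  set K : ℤ := (a+b+c+m+n).num with hKdef
  have hK : ((K:ℚ)) = a+b+c+m+n := Rat.coe_int_num_of_den_eq_one hS
  have h2fq : (((2*f).num:ℤ):ℚ) = 2*f := Rat.coe_int_num_of_den_eq_one hf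
  have condiff : ∀ (z t : ℕ), (z:ℚ) = a+b+c+m+n+(t:ℚ) →
      ((isNNInt ((z:ℚ)-c-b-a) ∧ isNNInt ((z:ℚ)-c-(a+n)-(b+m)) ∧
        isNNInt (b+a+(a+n)+(b+m)-(z:ℚ)) ∧ isNNInt ((z:ℚ)-f-(a+n)-a) ∧
        isNNInt ((z:ℚ)-b-f-(b+m)) ∧ isNNInt (c+b+f+(a+n)-(z:ℚ)) ∧
        isNNInt (c+a+(b+m)+f-(z:ℚ))) ↔
       (isNNInt (f - m - (t:ℚ)) ∧ isNNInt (f - n - (t:ℚ)) ∧ isNNInt (m + n + (t:ℚ)) ∧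
        isNNInt (a + b - c - (t:ℚ)) ∧ isNNInt (a - b + c + n - f + (t:ℚ)) ∧
        isNNInt (-a + b + c + m - f + (t:ℚ)))) := by
    intro z t hzt
    rw [show ((z:ℚ)-c-b-a) = m+n+(t:ℚ) from by rw [hzt]; ring,
        show ((z:ℚ)-c-(a+n)-(b+m)) = ((t:ℚ)) from by rw [hzt]; ring,
        show (b+a+(a+n)+(b+m)-(z:ℚ)) = a+b-c-(t:ℚ) from by rw [hzt]; ring,
        show ((z:ℚ)-f-(a+n)-a) = -a+b+c+m-f+(t:ℚ) from by rw [hzt]; ring,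
        show ((z:ℚ)-b-f-(b+m)) = a-b+c+n-f+(t:ℚ) from by rw [hzt]; ring,
        show (c+b+f+(a+n)-(z:ℚ)) = f-m-(t:ℚ) from by rw [hzt]; ring,
        show (c+a+(b+m)+f-(z:ℚ)) = f-n-(t:ℚ) from by rw [hzt]; ring]
    have ht : isNNInt ((t:ℚ)) := ⟨by positivity, Rat.den_natCast t⟩
    tauto
  have hprefnn : (0:ℝ) ≤ ((2*a+n+f+1:ℚ):ℝ)*((2*b+m+f+1:ℚ):ℝ) :=
    mul_nonneg (by exact_mod_cast (by linarith : (0:ℚ) ≤ 2*a+n+f+1))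
      (by exact_mod_cast (by linarith : (0:ℚ) ≤ 2*b+m+f+1))
  rw [sixJ, ← mul_assoc, ← Real.sqrt_mul hprefnn, Finset.mul_sum, Finset.mul_sum]
  simp only [mul_ite, mul_zero]
  rw [← Finset.sum_filter, ← Finset.sum_filter]
  refine Finset.sum_nbij' (fun z => ((z:ℤ) - K).toNat) (fun t => (K + (t:ℤ)).toNat)
    ?_ ?_ ?_ ?_ ?_
  · intro z hz
    simp only [Finset.mem_filter, Finset.mem_range] at hz ⊢
    obtain ⟨hzM, hP⟩ := hz
    have hKz : K ≤ (z:ℤ) := by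
      have h1 : ((K:ℚ)) ≤ ((z:ℕ):ℚ) := by rw [hK]; have := hP.2.1.1; linarith
      exact_mod_cast h1
    have htz : ((((z:ℤ) - K).toNat :ℤ)) = (z:ℤ) - K := Int.toNat_of_nonneg (by omega)
    have hzt : (z:ℚ) = a+b+c+m+n+((((z:ℤ)-K).toNat :ℕ):ℚ) := by
      have h5 : (((((z:ℤ)-K).toNat :ℕ):ℤ):ℚ) = ((z:ℚ)) - ((K:ℚ)) := by
        rw [htz]; push_cast; ring
      rw [hK] at h5
      push_cast at h5 ⊢
      linarith
    have hQ := (condiff z _ hzt).mp hP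
    refine ⟨?_, hQ⟩
    have hb1 : ((((z:ℤ)-K).toNat :ℕ):ℚ) ≤ (((2*f).num:ℤ):ℚ) := by
      rw [h2fq]; have := hQ.1.1; linarith
    have hb2 : ((((z:ℤ)-K).toNat :ℕ):ℤ) ≤ (2*f).num := by exact_mod_cast hb1
    omega
  · intro t ht
    simp only [Finset.mem_filter, Finset.mem_range] at ht ⊢
    obtain ⟨htT, hQ⟩ := ht
    have hKt : 0 ≤ K + (t:ℤ) := by
      have h1 : (0:ℚ) ≤ ((K:ℚ)) + ((t:ℕ):ℚ) := by
        rw [hK]; have := hQ.2.2.1.1; linarith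
      exact_mod_cast h1
    have hjz : (((K + (t:ℤ)).toNat :ℤ)) = K + (t:ℤ) := Int.toNat_of_nonneg hKt
    have hzt : (((K + (t:ℤ)).toNat :ℕ):ℚ) = a+b+c+m+n+((t:ℕ):ℚ) := by
      have h5 : ((((K + (t:ℤ)).toNat :ℕ):ℤ):ℚ) = ((K:ℚ)) + ((t:ℕ):ℚ) := by
        rw [hjz]; push_cast; ring
      rw [hK] at h5
      push_cast at h5 ⊢
      linarith
    have hP := (condiff _ t hzt).mpr hQ
    refine ⟨?_, hP⟩
    have hSig0 : (0:ℚ) ≤ c+b+a+f+(a+n)+(b+m) := by linarith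
    have hb1 : (((K + (t:ℤ)).toNat :ℕ):ℚ) ≤ (((c+b+a+f+(a+n)+(b+m)).num:ℤ):ℚ) := by
      have h6 : (((K + (t:ℤ)).toNat :ℕ):ℚ) ≤ c+b+a+f+(a+n)+(b+m) := by
        rw [hzt]; have := hQ.1.1; linarith
      exact h6.trans (by exact_mod_cast rat_le_num hSig0)
    have hb2 : (((K + (t:ℤ)).toNat :ℕ):ℤ) ≤ (c+b+a+f+(a+n)+(b+m)).num := by
      exact_mod_cast hb1
    omega
  · intro z hz
    simp only [Finset.mem_filter, Finset.mem_range] at hz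
    have hKz : K ≤ (z:ℤ) := by
      have h1 : ((K:ℚ)) ≤ ((z:ℕ):ℚ) := by rw [hK]; have := hz.2.2.1.1; linarith
      exact_mod_cast h1
    beta_reduce
    omega
  · intro t ht
    simp only [Finset.mem_filter, Finset.mem_range] at ht
    have hKt : 0 ≤ K + (t:ℤ) := by
      have h1 : (0:ℚ) ≤ ((K:ℚ)) + ((t:ℕ):ℚ) := by
        rw [hK]; have := ht.2.2.2.1.1; linarith
      exact_mod_cast h1
    beta_reduce
    omega
  · intro z hz
    simp only [Finset.mem_filter, Finset.mem_range] at hz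
    obtain ⟨hzM, hP⟩ := hz
    have hKz : K ≤ (z:ℤ) := by
      have h1 : ((K:ℚ)) ≤ ((z:ℕ):ℚ) := by rw [hK]; have := hP.2.1.1; linarith
      exact_mod_cast h1
    have htz : ((((z:ℤ) - K).toNat :ℤ)) = (z:ℤ) - K := Int.toNat_of_nonneg (by omega)
    have hzt : (z:ℚ) = a+b+c+m+n+((((z:ℤ)-K).toNat :ℕ):ℚ) := by
      have h5 : (((((z:ℤ)-K).toNat :ℕ):ℤ):ℚ) = ((z:ℚ)) - ((K:ℚ)) := by
        rw [htz]; push_cast; ring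
      rw [hK] at h5
      push_cast at h5 ⊢
      linarith
    exact term_eq a b c f m n z _ hzt h2af h2bf hS
end
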